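/- arXiv:1004.3046 — 6 statements merged into one kernel-verified Lean document; each statement's English description precedes it below -/
import Mathlib

section
/- Let N ≥ 1, let Ω ⊆ ℝ^N be open, let p ≥ 2, and let h : Ω → ℝ be twice continuously differentiable with h(x) > 0 and −Δ_p h(x) > 0 for every x ∈ Ω, where Δ_p h := div(|∇h|^{p−2}∇h). Then for every smooth compactly supported function θ : Ω → ℝ one has ∫_Ω ((−Δ_p h(x))/h(x)^{p−1}) |θ(x)|^p dx ≤ ∫_Ω |∇θ(x)|^p dx. -/
open MeasureTheory Metric Set Filter
open scoped RealInnerProductSpace Topology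

/-- Divergence of a vector field on `ℝ^N`. -/
noncomputable def vdiv {N : ℕ} (V : EuclideanSpace ℝ (Fin N) → EuclideanSpace ℝ (Fin N))
    (x : EuclideanSpace ℝ (Fin N)) : ℝ :=
  ∑ i, ⟪fderiv ℝ V x (EuclideanSpace.single i 1), EuclideanSpace.single i 1⟫

/-- The `p`-Laplacian `Δ_p h = div(|∇h|^{p-2} ∇h)`. -/
noncomputable def pLap {N : ℕ} (p : ℝ) (h : EuclideanSpace ℝ (Fin N) → ℝ)
    (x : EuclideanSpace ℝ (Fin N)) : ℝ :=
  vdiv (fun y => ‖gradient h y‖ ^ (p - 2) • gradient h y) x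

lemma box_div_zero {n : ℕ} (W : (Fin (n+1) → ℝ) → (Fin (n+1) → ℝ))
    (W' : (Fin (n+1) → ℝ) → (Fin (n+1) → ℝ) →L[ℝ] (Fin (n+1) → ℝ))
    (hWc : HasCompactSupport W)
    (hW' : ∀ x, HasFDerivAt W (W' x) x)
    (hint : Integrable (fun x => ∑ i, W' x (Pi.single i 1) i)) :
    ∫ x, ∑ i, W' x (Pi.single i 1) i = 0 := by
  obtain ⟨R, hR0, hRsub⟩ : ∃ R : ℝ, 0 < R ∧ tsupport W ⊆ ball 0 R :=
    hWc.isCompact.isBounded.subset_ball_lt 0 0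
  have hWzero : ∀ x : Fin (n+1) → ℝ, x ∉ ball (0 : Fin (n+1) → ℝ) R → W x = 0 := fun x hx =>
    image_eq_zero_of_notMem_tsupport (fun hm => hx (hRsub hm))
  have hW'zero : ∀ x : Fin (n+1) → ℝ, x ∉ ball (0 : Fin (n+1) → ℝ) R → W' x = 0 := by
    intro x hx
    have hmem : (tsupport W)ᶜ ∈ 𝓝 x :=
      (isClosed_tsupport W).isOpen_compl.mem_nhds (fun hm => hx (hRsub hm))
    have hev : W =ᶠ[𝓝 x] (fun _ => (0 : Fin (n+1) → ℝ)) :=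
      Filter.eventuallyEq_iff_exists_mem.2 ⟨(tsupport W)ᶜ, hmem,
        fun y hy => image_eq_zero_of_notMem_tsupport hy⟩
    have h0 : HasFDerivAt W (0 : (Fin (n+1) → ℝ) →L[ℝ] (Fin (n+1) → ℝ)) x :=
      (hasFDerivAt_const (0 : Fin (n+1) → ℝ) x).congr_of_eventuallyEq hev
    exact (hW' x).unique h0
  set a : Fin (n+1) → ℝ := fun _ => -R with ha
  set b : Fin (n+1) → ℝ := fun _ => R with hb
  have hle : a ≤ b := fun i => by simp only [ha, hb]; linarith
  have hnotball : ∀ x : Fin (n+1) → ℝ, ∀ i : Fin (n+1), R ≤ |x i| →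
      x ∉ ball (0 : Fin (n+1) → ℝ) R := by
    intro x i hi hmem
    rw [mem_ball_zero_iff] at hmem
    exact absurd (lt_of_le_of_lt (hi.trans (norm_le_pi_norm x i)) hmem) (lt_irrefl _)
  have key := MeasureTheory.integral_divergence_of_hasFDerivAt_off_countable a b hle W W'
    ∅ countable_empty (Continuous.continuousOn
      (continuous_iff_continuousAt.2 fun x => (hW' x).continuousAt))
    (fun x _ => hW' x) hint.integrableOn
  have hfaces : ∀ (i : Fin (n+1)) (c : ℝ), |c| = R →
      ∫ (x : Fin n → ℝ) in Icc (a ∘ i.succAbove) (b ∘ i.succAbove), W (i.insertNth c x) i = 0 := by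
    intro i c hc
    refine integral_eq_zero_of_ae (Filter.Eventually.of_forall fun y => ?_)
    have : W (i.insertNth c y) = 0 := by
      apply hWzero
      apply hnotball _ i
      rw [Fin.insertNth_apply_same, hc]
    simp [this]
  have key2 : ∫ x in Icc a b, ∑ i, W' x (Pi.single i 1) i = 0 := by
    rw [key]
    apply Finset.sum_eq_zero
    intro i _
    rw [hfaces i (b i) (by simp only [hb]; exact abs_of_pos hR0),
      hfaces i (a i) (by simp only [ha]; rw [abs_neg]; exact abs_of_pos hR0), sub_zero]
  rw [← key2]
  symm
  apply MeasureTheory.setIntegral_eq_integral_of_forall_compl_eq_zero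
  intro x hx
  obtain ⟨i, hi⟩ : ∃ i, x i < a i ∨ b i < x i := by
    simp only [Set.mem_Icc, Pi.le_def, not_and_or, not_forall, not_le] at hx
    rcases hx with ⟨i, hi⟩ | ⟨i, hi⟩
    exacts [⟨i, Or.inl hi⟩, ⟨i, Or.inr hi⟩]
  have hRle : R ≤ |x i| := by
    simp only [ha, hb] at hi
    rcases hi with hi | hi
    · rw [abs_of_neg (by linarith)]; linarith
    · rw [abs_of_pos (by linarith)]; linarith
  rw [hW'zero x (hnotball x i hRle)]
  simp

lemma euc_div_zero {N : ℕ} (hN : 1 ≤ N)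
    (W : EuclideanSpace ℝ (Fin N) → EuclideanSpace ℝ (Fin N))
    (W' : EuclideanSpace ℝ (Fin N) → EuclideanSpace ℝ (Fin N) →L[ℝ] EuclideanSpace ℝ (Fin N))
    (hWc : HasCompactSupport W)
    (hW' : ∀ x, HasFDerivAt W (W' x) x)
    (hint : Integrable (fun x => ∑ i, ⟪W' x (EuclideanSpace.single i 1),
      EuclideanSpace.single i 1⟫)) :
    ∫ x, ∑ i, ⟪W' x (EuclideanSpace.single i 1), EuclideanSpace.single i 1⟫ = 0 := by
  obtain ⟨n, rfl⟩ : ∃ n, N = n + 1 := Nat.exists_eq_succ_of_ne_zero (by omega)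
  set eL := EuclideanSpace.equiv (Fin (n+1)) ℝ with heL
  set Wp : (Fin (n+1) → ℝ) → (Fin (n+1) → ℝ) := fun x => eL (W (eL.symm x)) with hWp
  set Wp' : (Fin (n+1) → ℝ) → (Fin (n+1) → ℝ) →L[ℝ] (Fin (n+1) → ℝ) := fun x =>
    (eL.toContinuousLinearMap.comp (W' (eL.symm x))).comp eL.symm.toContinuousLinearMap with hWp'
  have hsingle : ∀ i : Fin (n+1), eL.symm (Pi.single i 1) = EuclideanSpace.single i 1 := by
    intro i; rfl
  have hdiv : ∀ x : EuclideanSpace ℝ (Fin (n+1)),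
      (∑ i, Wp' (eL x) (Pi.single i 1) i)
        = ∑ i, ⟪W' x (EuclideanSpace.single i 1), EuclideanSpace.single i 1⟫ := by
    intro x
    refine Finset.sum_congr rfl fun i _ => ?_
    rw [EuclideanSpace.inner_single_right]
    simp only [hWp', ContinuousLinearMap.coe_comp', Function.comp_apply,
      ContinuousLinearEquiv.coe_coe, hsingle i, ContinuousLinearEquiv.symm_apply_apply]
    simp
    rfl
  have hWp'd : ∀ x, HasFDerivAt Wp (Wp' x) x := by
    intro x
    exact eL.toContinuousLinearMap.hasFDerivAt.comp _
      ((hW' (eL.symm x)).comp x eL.symm.toContinuousLinearMap.hasFDerivAt)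
  have hWpc : HasCompactSupport Wp := by
    have h1 : HasCompactSupport (W ∘ eL.symm) :=
      hWc.comp_homeomorph eL.symm.toHomeomorph
    exact h1.comp_left (map_zero eL)
  have hvp := EuclideanSpace.volume_preserving_symm_measurableEquiv_toLp (Fin (n+1))
  have hemb := (MeasurableEquiv.toLp 2 (Fin (n+1) → ℝ)).symm.measurableEmbedding
  have hfun : ((fun y => ∑ i, Wp' y (Pi.single i 1) i) ∘
      ⇑(MeasurableEquiv.toLp 2 (Fin (n+1) → ℝ)).symm)
      = fun x => ∑ i, ⟪W' x (EuclideanSpace.single i 1), EuclideanSpace.single i 1⟫ :=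
    funext fun x => hdiv x
  have hintp : Integrable (fun x => ∑ i, Wp' x (Pi.single i 1) i) := by
    rw [← hvp.integrable_comp_emb hemb, hfun]; exact hint
  have hz := box_div_zero Wp Wp' hWpc hWp'd hintp
  rw [← hfun, Function.comp_def,
    hvp.integral_comp hemb (fun y => ∑ i, Wp' y (Pi.single i 1) i)]
  exact hz

lemma fderiv_apply_eq_inner_gradient {F : Type*} [NormedAddCommGroup F]
    [InnerProductSpace ℝ F] [CompleteSpace F] (f : F → ℝ) (x v : F) :
    fderiv ℝ f x v = ⟪gradient f x, v⟫ := by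
  rw [gradient, ← InnerProductSpace.toDual_apply_apply,
    (InnerProductSpace.toDual ℝ F).apply_symm_apply]

lemma young_ineq {p : ℝ} (hp : 2 ≤ p) {a s : ℝ} (ha : 0 ≤ a) (hs : 0 ≤ s) :
    p * s ^ (p - 1) * a ≤ a ^ p + (p - 1) * s ^ p := by
  have hp1 : 1 < p := by linarith
  have hcon := Real.HolderConjugate.conjExponent hp1
  have hy := Real.young_inequality a (s ^ (p - 1)) hcon
  rw [abs_of_nonneg ha, abs_of_nonneg (Real.rpow_nonneg hs _)] at hy
  have hsq : (s ^ (p - 1)) ^ p.conjExponent = s ^ p := by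
    rw [← Real.rpow_mul hs]
    congr 1
    rw [Real.conjExponent]
    rw [mul_div_assoc']
    rw [mul_comm, mul_div_assoc, div_self (by linarith : p - 1 ≠ 0), mul_one]
  rw [hsq] at hy
  have hq : p.conjExponent = p / (p - 1) := rfl
  have hp0 : (0:ℝ) < p := by linarith
  have hmul := mul_le_mul_of_nonneg_left hy (le_of_lt hp0)
  calc p * s ^ (p - 1) * a = p * (a * s ^ (p - 1)) := by ring
    _ ≤ p * (a ^ p / p + s ^ p / p.conjExponent) := hmul
    _ = a ^ p + (p - 1) * s ^ p := by
        rw [hq]; field_simp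

lemma euc_sum_single {N : ℕ} (v : EuclideanSpace ℝ (Fin N)) :
    ∑ i, v i • EuclideanSpace.single i (1 : ℝ) = v := by
  ext j
  rw [WithLp.ofLp_sum, Finset.sum_apply]
  simp [EuclideanSpace.single_apply]

lemma rpow_mul_self {x : ℝ} (hx : 0 ≤ x) {q r : ℝ} (h : q + 1 = r) (hr : r ≠ 0) :
    x ^ q * x = x ^ r := by
  subst h
  nth_rewrite 2 [← Real.rpow_one x]
  rw [← Real.rpow_add' hx hr]

set_option maxHeartbeats 2000000 in
/-- Hardy-type inequality (Lemma 1.6, inequality (1.10)):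
`∫_Ω ((-Δ_p h)/h^{p-1}) |θ|^p ≤ ∫_Ω |∇θ|^p` for positive `p`-superharmonic `h`. -/
theorem hardy_inequality {N : ℕ} (hN : 1 ≤ N)
    (Ω : Set (EuclideanSpace ℝ (Fin N))) (hΩ : IsOpen Ω)
    (p : ℝ) (hp : 2 ≤ p)
    (h : EuclideanSpace ℝ (Fin N) → ℝ)
    (hreg : ContDiffOn ℝ 2 h Ω)
    (hpos : ∀ x ∈ Ω, 0 < h x)
    (hsuper : ∀ x ∈ Ω, 0 < -pLap p h x)
    (θ : EuclideanSpace ℝ (Fin N) → ℝ)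
    (hθ : ContDiff ℝ (⊤ : ℕ∞) θ) (hθc : HasCompactSupport θ) (hθΩ : tsupport θ ⊆ Ω) :
    ∫ x in Ω, (-pLap p h x) / (h x) ^ (p - 1) * |θ x| ^ p
      ≤ ∫ x in Ω, ‖gradient θ x‖ ^ p := by
  classical
  have hp0 : (0:ℝ) < p := by linarith
  have hp1 : (1:ℝ) < p := by linarith
  set f : EuclideanSpace ℝ (Fin N) → ℝ := fun x => (-pLap p h x) / (h x) ^ (p - 1) * |θ x| ^ p with hf
  set Ψ : EuclideanSpace ℝ (Fin N) → ℝ := fun x => ‖gradient θ x‖ ^ p with hΨ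
  -- trivial bound for RHS integrand
  have hΨnn : ∀ x, 0 ≤ Ψ x := fun x => Real.rpow_nonneg (norm_nonneg _) p
  by_cases hfint : IntegrableOn f Ω volume
  swap
  · rw [MeasureTheory.integral_undef hfint]
    exact MeasureTheory.integral_nonneg hΨnn
  -- main definitions
  set G : EuclideanSpace ℝ (Fin N) → EuclideanSpace ℝ (Fin N) := fun y => ‖gradient h y‖ ^ (p - 2) • gradient h y with hG
  set A : EuclideanSpace ℝ (Fin N) → ℝ := fun x => |θ x| ^ p with hA
  set B : EuclideanSpace ℝ (Fin N) → ℝ := fun x => h x ^ (1 - p) with hB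
  set φ : EuclideanSpace ℝ (Fin N) → ℝ := fun x => A x * B x with hφ
  set W : EuclideanSpace ℝ (Fin N) → EuclideanSpace ℝ (Fin N) := fun x => φ x • G x with hW
  set W' : EuclideanSpace ℝ (Fin N) → EuclideanSpace ℝ (Fin N) →L[ℝ] EuclideanSpace ℝ (Fin N) := fun x =>
    φ x • fderiv ℝ G x + (fderiv ℝ φ x).smulRight (G x) with hW'
  set dW : EuclideanSpace ℝ (Fin N) → ℝ := fun x =>
    ∑ i, ⟪W' x (EuclideanSpace.single i 1), EuclideanSpace.single i 1⟫ with hdW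
  set v : EuclideanSpace ℝ (Fin N) → ℝ := fun x => fderiv ℝ φ x (G x) with hv
  -- pLap in terms of G
  have hpl : ∀ x : EuclideanSpace ℝ (Fin N), pLap p h x
      = ∑ i, ⟪fderiv ℝ G x (EuclideanSpace.single i 1), EuclideanSpace.single i 1⟫ := by
    intro x; rw [hG]; rfl
  -- basic vanishing off the support of θ
  have hθ0 : ∀ x ∉ tsupport θ, θ x = 0 := fun x hx => image_eq_zero_of_notMem_tsupport hx
  have hA0 : ∀ x ∉ tsupport θ, A x = 0 := by
    intro x hx; rw [hA]; simp only [hθ0 x hx, abs_zero]; exact Real.zero_rpow (by linarith)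
  have hφ0 : ∀ x ∉ tsupport θ, φ x = 0 := by
    intro x hx; rw [hφ]; simp only [hA0 x hx, zero_mul]
  have hφev : ∀ x ∉ tsupport θ, φ =ᶠ[𝓝 x] (fun _ => (0:ℝ)) := by
    intro x hx
    exact Filter.eventuallyEq_iff_exists_mem.2 ⟨(tsupport θ)ᶜ,
      (isClosed_tsupport θ).isOpen_compl.mem_nhds hx, fun y hy => hφ0 y hy⟩
  have hfφ0 : ∀ x ∉ tsupport θ, fderiv ℝ φ x = 0 := by
    intro x hx
    rw [(hφev x hx).fderiv_eq]
    exact fderiv_const_apply 0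
  have hW'0 : ∀ x ∉ tsupport θ, W' x = 0 := by
    intro x hx
    rw [hW']
    ext w
    simp [hφ0 x hx, hfφ0 x hx]
  -- differentiability facts
  have hhd : ∀ x ∈ Ω, DifferentiableAt ℝ h x := fun x hx =>
    ((hreg.differentiableOn (by norm_num)).differentiableAt (hΩ.mem_nhds hx))
  have hθd : Differentiable ℝ θ := hθ.differentiable (by simp)
  have hGd : ∀ x ∈ Ω, DifferentiableAt ℝ G x := by
    intro x hx
    by_contra hnd
    have h0 : fderiv ℝ G x = 0 := fderiv_zero_of_not_differentiableAt hnd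
    have hz : pLap p h x = 0 := by
      rw [hpl x, h0]
      simp
    have := hsuper x hx
    rw [hz] at this
    norm_num at this
  have hAd : ∀ x : EuclideanSpace ℝ (Fin N), HasFDerivAt A ((p * |θ x| ^ (p - 2) * θ x) • fderiv ℝ θ x) x := by
    intro x
    exact (hasDerivAt_abs_rpow (θ x) hp1).comp_hasFDerivAt x (hθd x).hasFDerivAt
  have hBd : ∀ x ∈ Ω, HasFDerivAt B (((1 - p) * h x ^ (1 - p - 1)) • fderiv ℝ h x) x := by
    intro x hx
    exact (Real.hasDerivAt_rpow_const (p := 1 - p)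
      (Or.inl (hpos x hx).ne')).comp_hasFDerivAt x (hhd x hx).hasFDerivAt
  have hφd : ∀ x ∈ Ω, HasFDerivAt φ
      (A x • (((1 - p) * h x ^ (1 - p - 1)) • fderiv ℝ h x)
        + B x • ((p * |θ x| ^ (p - 2) * θ x) • fderiv ℝ θ x)) x := by
    intro x hx
    exact (hAd x).mul (hBd x hx)
  have hfφ : ∀ x ∈ Ω, fderiv ℝ φ x
      = A x • (((1 - p) * h x ^ (1 - p - 1)) • fderiv ℝ h x)
        + B x • ((p * |θ x| ^ (p - 2) * θ x) • fderiv ℝ θ x) := fun x hx => (hφd x hx).fderiv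
  have hWd : ∀ x, HasFDerivAt W (W' x) x := by
    intro x
    by_cases hx : x ∈ Ω
    · exact ((hφd x hx).differentiableAt.hasFDerivAt).smul (hGd x hx).hasFDerivAt
    · have hxs : x ∉ tsupport θ := fun hm => hx (hθΩ hm)
      rw [hW'0 x hxs]
      refine (hasFDerivAt_const (0 : EuclideanSpace ℝ (Fin N)) x).congr_of_eventuallyEq ?_
      exact Filter.eventuallyEq_iff_exists_mem.2 ⟨(tsupport θ)ᶜ,
        (isClosed_tsupport θ).isOpen_compl.mem_nhds hxs, fun y hy => by
          rw [hW]; simp [hφ0 y hy]⟩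
  have hWc : HasCompactSupport W :=
    HasCompactSupport.intro hθc (fun x hx => by rw [hW]; simp [hφ0 x hx])
  -- divergence identities
  have hdW_off : ∀ x ∉ tsupport θ, dW x = 0 := by
    intro x hx
    rw [hdW]
    simp [hW'0 x hx]
  have hdWΩ : ∀ x ∈ Ω, dW x = φ x * pLap p h x + v x := by
    intro x hx
    have hterm : ∀ i : Fin N, ⟪W' x (EuclideanSpace.single i 1), EuclideanSpace.single i 1⟫
        = φ x * ⟪fderiv ℝ G x (EuclideanSpace.single i 1), EuclideanSpace.single i 1⟫
          + fderiv ℝ φ x (EuclideanSpace.single i 1) * G x i := by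
      intro i
      rw [hW']
      simp only [ContinuousLinearMap.add_apply, ContinuousLinearMap.coe_smul', Pi.smul_apply,
        ContinuousLinearMap.smulRight_apply]
      rw [inner_add_left, real_inner_smul_left, real_inner_smul_left,
        EuclideanSpace.inner_single_right]
      simp [EuclideanSpace.inner_single_right]
    show ∑ i, ⟪W' x (EuclideanSpace.single i 1), EuclideanSpace.single i 1⟫
      = φ x * pLap p h x + fderiv ℝ φ x (G x)
    calc ∑ i, ⟪W' x (EuclideanSpace.single i 1), EuclideanSpace.single i 1⟫
        = ∑ i, (φ x * ⟪fderiv ℝ G x (EuclideanSpace.single i 1), EuclideanSpace.single i 1⟫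
            + fderiv ℝ φ x (EuclideanSpace.single i 1) * G x i) :=
          Finset.sum_congr rfl fun i _ => hterm i
      _ = φ x * (∑ i, ⟪fderiv ℝ G x (EuclideanSpace.single i 1), EuclideanSpace.single i 1⟫)
            + ∑ i, fderiv ℝ φ x (EuclideanSpace.single i 1) * G x i := by
          rw [Finset.sum_add_distrib, Finset.mul_sum]
      _ = φ x * pLap p h x + fderiv ℝ φ x (G x) := by
          rw [← hpl x]
          congr 1
          conv_rhs => rw [← euc_sum_single (G x)]
          rw [map_sum]
          refine Finset.sum_congr rfl fun i _ => ?_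
          rw [ContinuousLinearMap.map_smul]
          simp [mul_comm]
  -- Picone pointwise inequality
  have hPicone : ∀ x ∈ Ω, v x ≤ Ψ x := by
    intro x hx
    have hgrad_h : ∀ w, fderiv ℝ h x w = ⟪gradient h x, w⟫ := fun w =>
      fderiv_apply_eq_inner_gradient h x w
    have hgrad_θ : ∀ w, fderiv ℝ θ x w = ⟪gradient θ x, w⟫ := fun w =>
      fderiv_apply_eq_inner_gradient θ x w
    set r := ‖gradient h x‖ with hrdef
    set T := |θ x| with hTdef
    set H := h x with hHdef
    set aa := ‖gradient θ x‖ with haadef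
    have hHpos : 0 < H := hpos x hx
    have hr0 : (0:ℝ) ≤ r := norm_nonneg _
    have hT0 : (0:ℝ) ≤ T := abs_nonneg _
    have ha0 : (0:ℝ) ≤ aa := norm_nonneg _
    have hAx : A x = T ^ p := rfl
    have hBx : B x = H ^ (1 - p) := rfl
    have hGx : G x = r ^ (p - 2) • gradient h x := rfl
    have hvx : v x = (A x * ((1 - p) * H ^ (1 - p - 1))) * ⟪gradient h x, G x⟫
        + (B x * (p * T ^ (p - 2) * θ x)) * ⟪gradient θ x, G x⟫ := by
      show fderiv ℝ φ x (G x) = _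
      rw [hfφ x hx]
      simp only [ContinuousLinearMap.add_apply, ContinuousLinearMap.coe_smul', Pi.smul_apply,
        smul_eq_mul]
      rw [hgrad_h (G x), hgrad_θ (G x)]
      ring
    have hinner_h : ⟪gradient h x, G x⟫ = r ^ (p - 2) * (r * r) := by
      rw [hGx, real_inner_smul_right, real_inner_self_eq_norm_mul_norm]
    have hnormG : ‖G x‖ = r ^ (p - 2) * r := by
      rw [hGx, norm_smul, Real.norm_eq_abs, abs_of_nonneg (Real.rpow_nonneg hr0 _)]
    have hp1ne : (p - 1 : ℝ) ≠ 0 := by intro hc; linarith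
    have hrp1 : r ^ (p - 2) * r = r ^ (p - 1) := rpow_mul_self hr0 (by ring) hp1ne
    have hrp : r ^ (p - 2) * (r * r) = r ^ p := by
      rw [← mul_assoc, hrp1, rpow_mul_self hr0 (by ring) hp0.ne']
    have hTp : T ^ (p - 2) * T = T ^ (p - 1) := rpow_mul_self hT0 (by ring) hp1ne
    have hinner_θ2 : θ x * ⟪gradient θ x, G x⟫ ≤ T * (aa * (r ^ (p - 2) * r)) := by
      calc θ x * ⟪gradient θ x, G x⟫ ≤ |θ x * ⟪gradient θ x, G x⟫| := le_abs_self _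
        _ = T * |⟪gradient θ x, G x⟫| := by rw [abs_mul]
        _ ≤ T * (aa * ‖G x‖) := mul_le_mul_of_nonneg_left (abs_real_inner_le_norm _ _) hT0
        _ = T * (aa * (r ^ (p - 2) * r)) := by rw [hnormG]
    set s := T * H⁻¹ * r with hsdef
    have hs0 : (0:ℝ) ≤ s := by positivity
    have hsp1 : s ^ (p - 1) = T ^ (p - 1) * H ^ (1 - p) * r ^ (p - 1) := by
      rw [hsdef, Real.mul_rpow (by positivity) hr0, Real.mul_rpow hT0 (by positivity),
        Real.inv_rpow hHpos.le, ← Real.rpow_neg hHpos.le, show (-(p - 1) : ℝ) = 1 - p by ring]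
    have hsp : s ^ p = T ^ p * H ^ (-p) * r ^ p := by
      rw [hsdef, Real.mul_rpow (by positivity) hr0, Real.mul_rpow hT0 (by positivity),
        Real.inv_rpow hHpos.le, ← Real.rpow_neg hHpos.le]
    have hyoung := young_ineq hp ha0 hs0
    have hH1p : (0:ℝ) < H ^ (1 - p) := Real.rpow_pos_of_pos hHpos _
    have hTp2 : (0:ℝ) ≤ T ^ (p - 2) := Real.rpow_nonneg hT0 _
    have h1 : v x = T ^ p * ((1 - p) * H ^ (-p)) * r ^ p
        + H ^ (1 - p) * (p * (T ^ (p - 2) * (θ x * ⟪gradient θ x, G x⟫))) := by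
      rw [hvx, hinner_h, hAx, hBx, show (1 - p - 1 : ℝ) = -p by ring, hrp]
      ring
    have hθI : T ^ (p - 2) * (θ x * ⟪gradient θ x, G x⟫)
        ≤ T ^ (p - 2) * (T * (aa * r ^ (p - 1))) := by
      apply mul_le_mul_of_nonneg_left _ hTp2
      rw [← hrp1]
      exact hinner_θ2
    have hstep : H ^ (1 - p) * (p * (T ^ (p - 2) * (θ x * ⟪gradient θ x, G x⟫)))
        ≤ p * s ^ (p - 1) * aa := by
      have h2 : H ^ (1 - p) * (p * (T ^ (p - 2) * (T * (aa * r ^ (p - 1)))))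
          = p * s ^ (p - 1) * aa := by
        rw [hsp1, ← hTp]
        ring
      calc H ^ (1 - p) * (p * (T ^ (p - 2) * (θ x * ⟪gradient θ x, G x⟫)))
          ≤ H ^ (1 - p) * (p * (T ^ (p - 2) * (T * (aa * r ^ (p - 1))))) := by
            apply mul_le_mul_of_nonneg_left _ hH1p.le
            exact mul_le_mul_of_nonneg_left hθI hp0.le
        _ = p * s ^ (p - 1) * aa := h2
    have h2 : T ^ p * ((1 - p) * H ^ (-p)) * r ^ p = -((p - 1) * s ^ p) := by
      rw [hsp]; ring
    show v x ≤ aa ^ p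
    rw [h1, h2]
    linarith
  -- relation between f and φ * pLap on Ω
  have hfrel : ∀ x ∈ Ω, f x = -(φ x * pLap p h x) := by
    intro x hx
    show (-pLap p h x) / h x ^ (p - 1) * |θ x| ^ p
      = -((|θ x| ^ p * h x ^ (1 - p)) * pLap p h x)
    have h1 : h x ^ (1 - p) = (h x ^ (p - 1))⁻¹ := by
      rw [show (1 - p : ℝ) = -(p - 1) by ring, Real.rpow_neg (hpos x hx).le]
    rw [h1, div_eq_mul_inv]
    ring
  -- v vanishes off the support
  have hv0 : ∀ x ∉ tsupport θ, v x = 0 := by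
    intro x hx; rw [hv]; simp [hfφ0 x hx]
  -- continuity and integrability of v
  have hvcont : Continuous v := by
    have hfhcont : ContinuousOn (fderiv ℝ h) Ω :=
      hreg.continuousOn_fderiv_of_isOpen hΩ (by norm_num)
    have hgcont : ContinuousOn (fun y => gradient h y) Ω := by
      show ContinuousOn
        (fun y => (InnerProductSpace.toDual ℝ (EuclideanSpace ℝ (Fin N))).symm (fderiv ℝ h y)) Ω
      exact (InnerProductSpace.toDual ℝ
        (EuclideanSpace ℝ (Fin N))).symm.continuous.comp_continuousOn hfhcont
    have hGcont : ContinuousOn G Ω := by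
      rw [hG]
      exact (hgcont.norm.rpow_const fun x _ => Or.inr (by linarith)).smul hgcont
    have hfθcont : Continuous (fderiv ℝ θ) := hθ.continuous_fderiv (by simp)
    have hhcont : ContinuousOn h Ω := hreg.continuousOn
    have hAcont : Continuous A := by
      rw [hA]
      exact (continuous_abs.comp hθ.continuous).rpow_const fun x => Or.inr hp0.le
    have hBcont : ContinuousOn B Ω := by
      rw [hB]
      exact hhcont.rpow_const fun x hx => Or.inl (hpos x hx).ne'
    have hDcont : Continuous (fun x => p * |θ x| ^ (p - 2) * θ x) :=
      (continuous_const.mul ((continuous_abs.comp hθ.continuous).rpow_const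
        fun x => Or.inr (by linarith))).mul hθ.continuous
    have hCcont : ContinuousOn (fun x => (1 - p) * h x ^ (1 - p - 1)) Ω :=
      continuousOn_const.mul (hhcont.rpow_const fun x hx => Or.inl (hpos x hx).ne')
    have hvform : ContinuousOn (fun x => (A x * ((1 - p) * h x ^ (1 - p - 1)))
        * (fderiv ℝ h x) (G x)
        + (B x * (p * |θ x| ^ (p - 2) * θ x)) * (fderiv ℝ θ x) (G x)) Ω := by
      apply ContinuousOn.add
      · exact (hAcont.continuousOn.mul hCcont).mul (hfhcont.clm_apply hGcont)
      · exact (hBcont.mul hDcont.continuousOn).mul (hfθcont.continuousOn.clm_apply hGcont)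
    have hveq : ∀ x ∈ Ω, v x = (A x * ((1 - p) * h x ^ (1 - p - 1))) * (fderiv ℝ h x) (G x)
        + (B x * (p * |θ x| ^ (p - 2) * θ x)) * (fderiv ℝ θ x) (G x) := by
      intro x hx
      show fderiv ℝ φ x (G x) = _
      rw [hfφ x hx]
      simp only [ContinuousLinearMap.add_apply, ContinuousLinearMap.coe_smul', Pi.smul_apply,
        smul_eq_mul]
      ring
    have hvcontOn : ContinuousOn v Ω := hvform.congr hveq
    rw [continuous_iff_continuousAt]
    intro x
    by_cases hx : x ∈ Ω
    · exact hvcontOn.continuousAt (hΩ.mem_nhds hx)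
    · have hxs : x ∉ tsupport θ := fun hm => hx (hθΩ hm)
      have hev : v =ᶠ[𝓝 x] (fun _ => (0:ℝ)) :=
        Filter.eventuallyEq_iff_exists_mem.2 ⟨(tsupport θ)ᶜ,
          (isClosed_tsupport θ).isOpen_compl.mem_nhds hxs, fun y hy => hv0 y hy⟩
      exact ContinuousAt.congr continuousAt_const hev.symm
  have hvsupp : HasCompactSupport v :=
    HasCompactSupport.intro hθc (fun x hx => hv0 x hx)
  have hvint : Integrable v := hvcont.integrable_of_hasCompactSupport hvsupp
  -- integrability of Ψ
  have hgradθcont : Continuous (fun x : EuclideanSpace ℝ (Fin N) => gradient θ x) := by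
    have : Continuous (fderiv ℝ θ) := hθ.continuous_fderiv (by simp)
    exact (InnerProductSpace.toDual ℝ (EuclideanSpace ℝ (Fin N))).symm.continuous.comp this
  have hΨcont : Continuous Ψ := by
    rw [hΨ]
    exact (hgradθcont.norm).rpow_const (fun x => Or.inr hp0.le)
  have hΨ0 : ∀ x ∉ tsupport θ, Ψ x = 0 := by
    intro x hx
    have hev : θ =ᶠ[𝓝 x] (fun _ => (0:ℝ)) :=
      Filter.eventuallyEq_iff_exists_mem.2 ⟨(tsupport θ)ᶜ,
        (isClosed_tsupport θ).isOpen_compl.mem_nhds hx, fun y hy => hθ0 y hy⟩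
    have h1 : fderiv ℝ θ x = 0 := by rw [hev.fderiv_eq]; exact fderiv_const_apply 0
    have h2 : gradient θ x = 0 := by rw [gradient, h1, map_zero]
    rw [hΨ]
    simp only [h2, norm_zero]
    exact Real.zero_rpow (by linarith)
  have hΨint : Integrable Ψ :=
    hΨcont.integrable_of_hasCompactSupport
      (HasCompactSupport.intro hθc (fun x hx => hΨ0 x hx))
  -- assemble
  set u : EuclideanSpace ℝ (Fin N) → ℝ := Ω.indicator (fun x => -(f x)) with hu
  have huint : Integrable u := (integrable_indicator_iff hΩ.measurableSet).2 hfint.neg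
  have hdW_eq : dW = fun x => u x + v x := by
    funext x
    by_cases hx : x ∈ Ω
    · rw [hdWΩ x hx, hu, Set.indicator_of_mem hx, hfrel x hx, neg_neg]
    · have hxs : x ∉ tsupport θ := fun hm => hx (hθΩ hm)
      rw [hdW_off x hxs, hu, Set.indicator_of_notMem hx, hv0 x hxs, add_zero]
  have hdWint : Integrable dW := by rw [hdW_eq]; exact huint.add hvint
  have hzero : ∫ x, dW x = 0 := euc_div_zero hN W W' hWc hWd hdWint
  have hsplit : ∫ x, dW x = (∫ x, u x) + ∫ x, v x := by
    rw [hdW_eq]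
    exact MeasureTheory.integral_add huint hvint
  have huval : ∫ x, u x = -∫ x in Ω, f x := by
    rw [hu, MeasureTheory.integral_indicator hΩ.measurableSet, MeasureTheory.integral_neg]
  have hvval : ∫ x, v x = ∫ x in Ω, v x := by
    symm
    apply MeasureTheory.setIntegral_eq_integral_of_forall_compl_eq_zero
    intro x hx
    exact hv0 x (fun hm => hx (hθΩ hm))
  have hfeq : ∫ x in Ω, f x = ∫ x in Ω, v x := by
    have : (0:ℝ) = (-∫ x in Ω, f x) + ∫ x in Ω, v x := by
      rw [← huval, ← hvval, ← hsplit, hzero]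
    linarith
  have hmono : ∫ x in Ω, v x ≤ ∫ x in Ω, Ψ x :=
    setIntegral_mono_on hvint.integrableOn hΨint.integrableOn hΩ.measurableSet
      (fun x hx => hPicone x hx)
  calc ∫ x in Ω, f x = ∫ x in Ω, v x := hfeq
    _ ≤ ∫ x in Ω, Ψ x := hmono
end

section
/- Let N ≥ 1, p > 2 and 1 ≤ q < 2. Let f : ℝ^N → ℝ be a measurable function such that f² is locally integrable and sup_{x ∈ ℝ^N} W_{2/3,3}^{f²}(x, R₀) < ∞ for some R₀ > 0. Then |f|^q belongs to the nonlinear Kato class K_p, that is, lim_{R → 0} sup_{x ∈ ℝ^N} W_p^{|f|^q}(x, R) = 0. -/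
open MeasureTheory Metric Set Filter
open scoped Topology

/-- The Wolff potential `W_{β,p}^f(x,R)`. -/
noncomputable def wolff (N : ℕ) (β p : ℝ) (f : EuclideanSpace ℝ (Fin N) → ℝ)
    (x : EuclideanSpace ℝ (Fin N)) (R : ℝ) : ℝ :=
  ∫ r in Set.Ioo (0:ℝ) R,
    (1/r) * ((r ^ (β*p - (N:ℝ)) * ∫ y in Metric.ball x r, f y) ^ (1/(p-1)))

/-!
The bound on `W_{2/3,3}^{f²}` forces the Morrey growth `∫_{B_r(x)} f² ≲ r^{N-2}`: on `(r, 2r)` the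
integrand of the potential is at least a fixed multiple of `(r^{2-N} ∫_{B_r(x)} f²)^{1/2} / r`.
This needs the potential at the center to be an honest integral, which holds at Lebesgue points of
`f²`, hence at some point of every ball, and moving the center there costs a doubling of the
radius. Jensen's inequality for the concave `t ↦ t^{q/2}` then gives `∫_{B_r(x)} |f|^q ≲ r^{N-q}`,
so `W_p^{|f|^q}(x,R) ≲ R^{(p-q)/(p-1)}` uniformly in `x`, which tends to `0` because `q < p`.
-/

noncomputable def wolffIntegrand (N : ℕ) (β p : ℝ) (f : EuclideanSpace ℝ (Fin N) → ℝ)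
    (x : EuclideanSpace ℝ (Fin N)) (r : ℝ) : ℝ :=
  (1/r) * ((r ^ (β*p - (N:ℝ)) * ∫ y in ball x r, f y) ^ (1/(p-1)))

theorem wolff_eq_setIntegral_wolffIntegrand (N : ℕ) (β p : ℝ)
    (f : EuclideanSpace ℝ (Fin N) → ℝ) (x : EuclideanSpace ℝ (Fin N)) (R : ℝ) :
    wolff N β p f x R = ∫ r in Ioo 0 R, wolffIntegrand N β p f x r :=
  rfl

theorem min_one_two_rpow_mul_rpow_le {r s : ℝ} (e : ℝ) (hr : 0 < r) (hrs : r ≤ s)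
    (hs : s ≤ 2 * r) : min 1 (2 ^ e) * r ^ e ≤ s ^ e := by
  rcases le_total 0 e with he | he
  · calc min 1 (2 ^ e) * r ^ e ≤ 1 * r ^ e := by gcongr; exact min_le_left _ _
      _ ≤ s ^ e := by rw [one_mul]; exact Real.rpow_le_rpow hr.le hrs he
  · calc min 1 (2 ^ e) * r ^ e ≤ 2 ^ e * r ^ e := by gcongr; exact min_le_right _ _
      _ = (2 * r) ^ e := (Real.mul_rpow zero_le_two hr.le).symm
      _ ≤ s ^ e := Real.rpow_le_rpow_of_nonpos (hr.trans_le hrs) hs he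

theorem volume_real_closedBall_eq_rpow_mul {N : ℕ} (x : EuclideanSpace ℝ (Fin N)) {r : ℝ}
    (hr : 0 ≤ r) :
    volume.real (closedBall x r) =
      r ^ (N:ℝ) * volume.real (closedBall (0 : EuclideanSpace ℝ (Fin N)) 1) := by
  rw [Measure.addHaar_real_closedBall' _ _ hr, finrank_euclideanSpace_fin, Real.rpow_natCast]

theorem setIntegral_rpow_le {α : Type*} [MeasurableSpace α] {μ : Measure α} {f : α → ℝ}
    {t : Set α} {s : ℝ} (hs0 : 0 ≤ s) (hs1 : s ≤ 1) (hf0 : 0 ≤ f) (hf : IntegrableOn f t μ)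
    (ht0 : μ t ≠ 0) (ht : μ t ≠ ⊤) :
    ∫ y in t, f y ^ s ∂μ ≤ (∫ y in t, f y ∂μ) ^ s * μ.real t ^ (1 - s) := by
  have hpow_le : ∀ y, f y ^ s ≤ 1 + f y := fun y => by
    rcases le_total (f y) 1 with h | h
    · exact (Real.rpow_le_one (hf0 y) h hs0).trans (le_add_of_nonneg_right (hf0 y))
    · linarith [Real.rpow_le_self_of_one_le h hs1]
  have hpow : IntegrableOn (fun y => f y ^ s) t μ :=
    Integrable.mono' ((integrableOn_const (C := (1:ℝ)) ht).add hf)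
      ((Real.continuous_rpow_const hs0).comp_aestronglyMeasurable hf.aestronglyMeasurable)
      (Eventually.of_forall fun y => by
        rw [Real.norm_of_nonneg (Real.rpow_nonneg (hf0 y) _)]; exact hpow_le y)
  have jensen := (Real.concaveOn_rpow hs0 hs1).le_map_set_average
    (Real.continuous_rpow_const hs0).continuousOn isClosed_Ici ht0 ht
    (Eventually.of_forall fun y => hf0 y) hf hpow
  have hμ : 0 < μ.real t := ENNReal.toReal_pos ht0 ht
  have hI : 0 ≤ ∫ y in t, f y ∂μ := setIntegral_nonneg_of_ae (Eventually.of_forall hf0)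
  rw [setAverage_eq, setAverage_eq, smul_eq_mul, smul_eq_mul,
    inv_mul_le_iff₀ hμ, Real.mul_rpow (inv_nonneg.2 hμ.le) hI, Real.inv_rpow hμ.le] at jensen
  calc ∫ y in t, f y ^ s ∂μ ≤ μ.real t * ((μ.real t ^ s)⁻¹ * (∫ y in t, f y ∂μ) ^ s) := jensen
    _ = (∫ y in t, f y ∂μ) ^ s * μ.real t ^ (1 - s) := by
        rw [Real.rpow_sub hμ, Real.rpow_one]; field_simp

section Wolff

variable {N : ℕ} {β p : ℝ} {g : EuclideanSpace ℝ (Fin N) → ℝ}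

theorem monotone_setIntegral_ball (hg0 : 0 ≤ g) (hg : LocallyIntegrable g)
    (x : EuclideanSpace ℝ (Fin N)) : Monotone fun r => ∫ y in ball x r, g y := fun _ r' hr =>
  setIntegral_mono_set
    ((hg.integrableOn_isCompact (isCompact_closedBall x r')).mono_set ball_subset_closedBall)
    (Eventually.of_forall hg0) (ball_subset_ball hr).eventuallyLE

theorem wolffIntegrand_nonneg (hg0 : 0 ≤ g) (x : EuclideanSpace ℝ (Fin N)) {r : ℝ}
    (hr : 0 < r) : 0 ≤ wolffIntegrand N β p g x r := by
  have : 0 ≤ ∫ y in ball x r, g y := integral_nonneg hg0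
  unfold wolffIntegrand
  positivity

theorem measurable_wolffIntegrand (hg0 : 0 ≤ g) (hg : LocallyIntegrable g)
    (x : EuclideanSpace ℝ (Fin N)) : Measurable (wolffIntegrand N β p g x) :=
  (measurable_const.div measurable_id).mul
    (((measurable_id.pow_const _).mul (monotone_setIntegral_ball hg0 hg x).measurable).pow_const _)

theorem wolffIntegrand_le_of_setIntegral_ball_le (hp : 1 < p) (hg0 : 0 ≤ g)
    {x : EuclideanSpace ℝ (Fin N)} {r K γ : ℝ} (hr : 0 < r) (hK : 0 ≤ K)
    (h : ∫ y in ball x r, g y ≤ K * r ^ ((N:ℝ) - γ)) :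
    wolffIntegrand N β p g x r ≤ K ^ (1/(p-1)) * r ^ ((β*p - γ)/(p-1) - 1) := by
  have hA : 0 ≤ ∫ y in ball x r, g y := integral_nonneg hg0
  calc wolffIntegrand N β p g x r
      ≤ (1/r) * ((r ^ (β*p - (N:ℝ)) * (K * r ^ ((N:ℝ) - γ))) ^ (1/(p-1))) := by
        unfold wolffIntegrand; gcongr
    _ = K ^ (1/(p-1)) * r ^ ((β*p - γ)/(p-1) - 1) := by
        rw [mul_left_comm, ← Real.rpow_add hr, Real.mul_rpow hK (by positivity),
          ← Real.rpow_mul hr.le, Real.rpow_sub_one hr.ne']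
        field_simp
        ring_nf

theorem min_one_two_rpow_mul_setIntegral_ball_le (hp : 1 < p) (hg0 : 0 ≤ g)
    (hg : LocallyIntegrable g) {x : EuclideanSpace ℝ (Fin N)} {R M r : ℝ}
    (hint : IntegrableOn (wolffIntegrand N β p g x) (Ioo 0 R))
    (hM : ∫ s in Ioo 0 R, wolffIntegrand N β p g x s ≤ M) (hr : 0 < r) (h2r : 2 * r ≤ R) :
    min 1 (2 ^ (β*p - N)) * r ^ (β*p - N) * ∫ y in ball x r, g y ≤ (2 * M) ^ (p - 1) := by
  set X := min 1 (2 ^ (β*p - N)) * r ^ (β*p - N) * ∫ y in ball x r, g y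
  have hX : 0 ≤ X := by
    have : 0 ≤ ∫ y in ball x r, g y := integral_nonneg hg0
    positivity
  have hsub : Ioo r (2 * r) ⊆ Ioo 0 R := Ioo_subset_Ioo hr.le h2r
  have lower : ∀ s ∈ Ioo r (2 * r), 1 / (2 * r) * X ^ (1/(p-1)) ≤ wolffIntegrand N β p g x s := by
    rintro s ⟨hrs, hs2r⟩
    have hs : 0 < s := hr.trans hrs
    unfold wolffIntegrand
    have hp1 : 0 < 1/(p-1) := by simp only [one_div, inv_pos, sub_pos, hp]
    refine mul_le_mul (one_div_le_one_div_of_le hs hs2r.le) (Real.rpow_le_rpow hX ?_ hp1.le)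
      (by positivity) (by positivity)
    calc X ≤ s ^ (β*p - N) * ∫ y in ball x r, g y :=
          mul_le_mul_of_nonneg_right (min_one_two_rpow_mul_rpow_le _ hr hrs.le hs2r.le)
            (integral_nonneg hg0)
      _ ≤ s ^ (β*p - N) * ∫ y in ball x s, g y :=
          mul_le_mul_of_nonneg_left (monotone_setIntegral_ball hg0 hg x hrs.le) (by positivity)
  have hvol : volume.real (Ioo r (2 * r)) = r := by
    rw [Real.volume_real_Ioo_of_le (by linarith)]; ring
  have key : r * (1 / (2 * r) * X ^ (1/(p-1))) ≤ M :=
    calc r * (1 / (2 * r) * X ^ (1/(p-1)))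
        = ∫ _ in Ioo r (2 * r), 1 / (2 * r) * X ^ (1/(p-1)) := by
          rw [setIntegral_const, hvol, smul_eq_mul]
      _ ≤ ∫ s in Ioo r (2 * r), wolffIntegrand N β p g x s :=
          setIntegral_mono_on (integrableOn_const measure_Ioo_lt_top.ne) (hint.mono_set hsub)
            measurableSet_Ioo lower
      _ ≤ ∫ s in Ioo 0 R, wolffIntegrand N β p g x s :=
          setIntegral_mono_set hint
            ((ae_restrict_mem measurableSet_Ioo).mono fun s hs => wolffIntegrand_nonneg hg0 x hs.1)
            hsub.eventuallyLE
      _ ≤ M := hM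
  have hXM : X ^ (p - 1)⁻¹ ≤ 2 * M := by
    rw [← one_div]
    have : r * (1 / (2 * r) * X ^ (1/(p-1))) = X ^ (1/(p-1)) / 2 := by field_simp
    linarith
  exact (Real.rpow_inv_le_iff_of_pos hX ((Real.rpow_nonneg hX _).trans hXM) (by linarith)).1 hXM

theorem ae_exists_setIntegral_ball_le_mul_rpow (hg0 : 0 ≤ g) (hg : LocallyIntegrable g) (R : ℝ) :
    ∀ᵐ x, ∃ K, 0 ≤ K ∧ ∀ s ∈ Ioo 0 R, ∫ y in ball x s, g y ≤ K * s ^ (N:ℝ) := by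
  filter_upwards [IsUnifLocDoublingMeasure.ae_tendsto_average (μ := volume) hg 1] with x hx
  have hlim := hx (fun _ => x) id tendsto_id (eventually_nhdsWithin_of_forall fun s hs =>
    mem_closedBall_self (by simpa using (mem_Ioi.1 hs).le))
  obtain ⟨δ, hδ, hδavg⟩ := (nhdsGT_basis (0:ℝ)).eventually_iff.1
    (hlim.eventually_lt_const (lt_add_one (g x)))
  set V := volume.real (closedBall (0 : EuclideanSpace ℝ (Fin N)) 1)
  set A := fun s => ∫ y in ball x s, g y
  have hA0 : 0 ≤ A R := integral_nonneg hg0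
  refine ⟨max (V * (g x + 1)) (A R / δ ^ (N:ℝ)), by positivity, fun s ⟨hs, hsR⟩ => ?_⟩
  rcases lt_or_ge s δ with hsδ | hδs
  · have hcb := volume_real_closedBall_eq_rpow_mul x hs.le
    calc A s ≤ ∫ y in closedBall x s, g y :=
          setIntegral_mono_set (hg.integrableOn_isCompact (isCompact_closedBall x s))
            (Eventually.of_forall hg0) ball_subset_closedBall.eventuallyLE
      _ = s ^ (N:ℝ) * V * ⨍ y in closedBall x s, g y := by
          rw [← hcb, ← smul_eq_mul, measure_smul_setAverage _ measure_closedBall_lt_top.ne]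
      _ ≤ s ^ (N:ℝ) * V * (g x + 1) := by
          gcongr
          exact (hδavg ⟨hs, hsδ⟩).le
      _ ≤ max (V * (g x + 1)) (A R / δ ^ (N:ℝ)) * s ^ (N:ℝ) := by
          rw [mul_assoc, mul_comm]; gcongr; exact le_max_left _ _
  · calc A s ≤ A R := monotone_setIntegral_ball hg0 hg x hsR.le
      _ = A R / δ ^ (N:ℝ) * δ ^ (N:ℝ) := by field_simp
      _ ≤ max (V * (g x + 1)) (A R / δ ^ (N:ℝ)) * s ^ (N:ℝ) := by
          gcongr; exact le_max_right _ _

theorem ae_integrableOn_wolffIntegrand (hβ : 0 < β) (hp : 1 < p) (hg0 : 0 ≤ g)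
    (hg : LocallyIntegrable g) {R : ℝ} (hR : 0 < R) :
    ∀ᵐ x, IntegrableOn (wolffIntegrand N β p g x) (Ioo 0 R) := by
  filter_upwards [ae_exists_setIntegral_ball_le_mul_rpow hg0 hg R] with x ⟨K, hK, hKx⟩
  have hexp : -1 < (β*p - 0)/(p-1) - 1 := by
    have : 0 < (β*p - 0)/(p-1) := div_pos (by nlinarith) (by linarith)
    linarith
  refine Integrable.mono'
    (((intervalIntegral.integrableOn_Ioo_rpow_iff hR).2 hexp).const_mul (K ^ (1/(p-1))))
    (measurable_wolffIntegrand hg0 hg x).aestronglyMeasurable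
    ((ae_restrict_mem measurableSet_Ioo).mono fun s hs => ?_)
  rw [Real.norm_of_nonneg (wolffIntegrand_nonneg hg0 x hs.1)]
  exact wolffIntegrand_le_of_setIntegral_ball_le hp hg0 hs.1 hK (by simpa using hKx s hs)

theorem exists_setIntegral_ball_le_of_forall_wolff_le (hβ : 0 < β) (hp : 1 < p) (hg0 : 0 ≤ g)
    (hg : LocallyIntegrable g) {R M : ℝ} (hR : 0 < R) (hM : ∀ x, wolff N β p g x R ≤ M) :
    ∃ C, 0 ≤ C ∧ ∀ x r, 0 < r → 4 * r ≤ R →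
      ∫ y in ball x r, g y ≤ C * r ^ ((N:ℝ) - β*p) := by
  set e := β*p - N
  have hM0 : 0 ≤ M := (setIntegral_nonneg measurableSet_Ioo fun s hs =>
    wolffIntegrand_nonneg hg0 0 hs.1).trans (hM 0)
  have hc : 0 < min 1 ((2:ℝ) ^ e) := lt_min one_pos (by positivity)
  refine ⟨(2 * M) ^ (p - 1) / (min 1 (2 ^ e) * 2 ^ e), by positivity, fun x r hr h4r => ?_⟩
  -- `wolff` is a Bochner integral, so `hM` is void at centers where the integrand is not
  -- integrable; such centers form a null set, so every ball contains a usable one.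
  obtain ⟨x', hx', hint⟩ := Measure.exists_mem_of_measure_ne_zero_of_ae
    (measure_ball_pos volume x hr).ne'
    (ae_restrict_of_ae (ae_integrableOn_wolffIntegrand hβ hp hg0 hg hR))
  have hball : ball x r ⊆ ball x' (2 * r) := by
    intro y hy
    rw [mem_ball] at hy hx' ⊢
    linarith [dist_triangle_right y x' x]
  have hdyadic := min_one_two_rpow_mul_setIntegral_ball_le hp hg0 hg hint (hM x')
    (by positivity : 0 < 2 * r) (by linarith)
  have hpow : r ^ ((N:ℝ) - β*p) = ((2 * r) ^ e)⁻¹ * 2 ^ e := by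
    rw [Real.mul_rpow zero_le_two hr.le, show (N:ℝ) - β*p = -e by ring, Real.rpow_neg hr.le]
    field_simp
  calc ∫ y in ball x r, g y ≤ ∫ y in ball x' (2 * r), g y :=
        setIntegral_mono_set ((hg.integrableOn_isCompact (isCompact_closedBall x' (2 * r))).mono_set
          ball_subset_closedBall) (Eventually.of_forall hg0) hball.eventuallyLE
    _ ≤ (2 * M) ^ (p - 1) / (min 1 (2 ^ e) * (2 * r) ^ e) := by
        rw [le_div_iff₀ (by positivity)]; linarith
    _ = (2 * M) ^ (p - 1) / (min 1 (2 ^ e) * 2 ^ e) * r ^ ((N:ℝ) - β*p) := by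
        rw [hpow]; field_simp

theorem setIntegral_ball_rpow_le {s : ℝ} (hs0 : 0 ≤ s) (hs1 : s ≤ 1) (hg0 : 0 ≤ g)
    (hg : LocallyIntegrable g) {x : EuclideanSpace ℝ (Fin N)} {r C γ : ℝ} (hr : 0 < r)
    (hC : 0 ≤ C) (h : ∫ y in ball x r, g y ≤ C * r ^ ((N:ℝ) - γ)) :
    ∫ y in ball x r, g y ^ s ≤
      C ^ s * volume.real (closedBall (0 : EuclideanSpace ℝ (Fin N)) 1) ^ (1 - s) *
        r ^ ((N:ℝ) - s * γ) := by
  set V := volume.real (closedBall (0 : EuclideanSpace ℝ (Fin N)) 1)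
  have hvol : volume.real (ball x r) ≤ r ^ (N:ℝ) * V :=
    (measureReal_mono ball_subset_closedBall measure_closedBall_lt_top.ne).trans_eq
      (volume_real_closedBall_eq_rpow_mul x hr.le)
  calc ∫ y in ball x r, g y ^ s
      ≤ (∫ y in ball x r, g y) ^ s * volume.real (ball x r) ^ (1 - s) :=
        setIntegral_rpow_le hs0 hs1 hg0
          ((hg.integrableOn_isCompact (isCompact_closedBall x r)).mono_set ball_subset_closedBall)
          (measure_ball_pos volume x hr).ne' measure_ball_lt_top.ne
    _ ≤ (C * r ^ ((N:ℝ) - γ)) ^ s * (r ^ (N:ℝ) * V) ^ (1 - s) := by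
        have : 0 ≤ ∫ y in ball x r, g y := integral_nonneg hg0
        gcongr
    _ = C ^ s * V ^ (1 - s) * r ^ ((N:ℝ) - s * γ) := by
        have hexp : r ^ ((N:ℝ) - s * γ) = r ^ (((N:ℝ) - γ) * s) * r ^ ((N:ℝ) * (1 - s)) := by
          rw [← Real.rpow_add hr]; ring_nf
        rw [Real.mul_rpow hC (by positivity), Real.mul_rpow (by positivity) (by positivity),
          ← Real.rpow_mul hr.le, ← Real.rpow_mul hr.le, hexp]
        ring

theorem wolff_le_of_setIntegral_ball_le (hp : 1 < p) {γ : ℝ} (hγ : γ < β * p) (hg0 : 0 ≤ g)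
    {x : EuclideanSpace ℝ (Fin N)} {R C : ℝ} (hR : 0 < R) (hC : 0 ≤ C)
    (h : ∀ r ∈ Ioo 0 R, ∫ y in ball x r, g y ≤ C * r ^ ((N:ℝ) - γ)) :
    wolff N β p g x R ≤ C ^ (1/(p-1)) * R ^ ((β*p - γ)/(p-1)) / ((β*p - γ)/(p-1)) := by
  set α := (β*p - γ)/(p-1)
  have hα : 0 < α := div_pos (by linarith) (by linarith)
  have hmajorant : IntegrableOn (fun r => C ^ (1/(p-1)) * r ^ (α - 1)) (Ioo 0 R) :=
    ((intervalIntegral.integrableOn_Ioo_rpow_iff hR).2 (by linarith)).const_mul _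
  rw [wolff_eq_setIntegral_wolffIntegrand]
  calc ∫ r in Ioo 0 R, wolffIntegrand N β p g x r
      ≤ ∫ r in Ioo 0 R, C ^ (1/(p-1)) * r ^ (α - 1) :=
        integral_mono_of_nonneg
          ((ae_restrict_mem measurableSet_Ioo).mono fun r hr => wolffIntegrand_nonneg hg0 x hr.1)
          hmajorant
          ((ae_restrict_mem measurableSet_Ioo).mono fun r hr =>
            wolffIntegrand_le_of_setIntegral_ball_le hp hg0 hr.1 hC (h r hr))
    _ = C ^ (1/(p-1)) * R ^ α / α := by
        rw [← integral_Ioc_eq_integral_Ioo, ← intervalIntegral.integral_of_le hR.le,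
          intervalIntegral.integral_const_mul, integral_rpow (Or.inl (by linarith)),
          sub_add_cancel, Real.zero_rpow hα.ne']
        ring

end Wolff

/-- `h ∈ K_p`. -/
def MemKato (N : ℕ) (p : ℝ) (h : EuclideanSpace ℝ (Fin N) → ℝ) : Prop :=
  ∀ ε > 0, ∃ δ > 0, ∀ R : ℝ, 0 < R → R < δ → ∀ x, wolff N 1 p h x R < ε

theorem memKato_of_setIntegral_ball_le {N : ℕ} {p γ R₁ C : ℝ}
    {g : EuclideanSpace ℝ (Fin N) → ℝ} (hp : 1 < p) (hγ : γ < p) (hg0 : 0 ≤ g) (hR₁ : 0 < R₁)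
    (hC : 0 ≤ C) (h : ∀ x r, 0 < r → r < R₁ → ∫ y in ball x r, g y ≤ C * r ^ ((N:ℝ) - γ)) :
    MemKato N p g := by
  intro ε hε
  set α := (1*p - γ)/(p-1)
  have hα : 0 < α := div_pos (by linarith) (by linarith)
  have hlim : Tendsto (fun R => C ^ (1/(p-1)) * R ^ α / α) (𝓝 0) (𝓝 0) := by
    have := (((Real.continuousAt_rpow_const 0 α (Or.inr hα.le)).const_mul
      (C ^ (1/(p-1)))).div_const α).tendsto
    rwa [Real.zero_rpow hα.ne', mul_zero, zero_div] at this
  obtain ⟨δ, hδ, hδε⟩ := Metric.eventually_nhds_iff.1 (hlim.eventually_lt_const hε)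
  refine ⟨min δ R₁, lt_min hδ hR₁, fun R hR hRδ x => ?_⟩
  calc wolff N 1 p g x R ≤ C ^ (1/(p-1)) * R ^ α / α :=
        wolff_le_of_setIntegral_ball_le hp (by linarith) hg0 hR hC fun r hr =>
          h x r hr.1 (hr.2.trans (hRδ.trans_le (min_le_right _ _)))
    _ < ε := hδε <| by
        rw [Real.dist_eq, sub_zero, abs_of_pos hR]; exact hRδ.trans_le (min_le_left _ _)

theorem abs_pow_mem_kato_general {N : ℕ} (p q : ℝ) (hp : 2 < p)
    (hq1 : 1 ≤ q) (hq2 : q < 2)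
    (f : EuclideanSpace ℝ (Fin N) → ℝ)
    (hf2 : LocallyIntegrable (fun y => (f y) ^ 2))
    (R₀ : ℝ) (hR₀ : 0 < R₀)
    (hbdd : ∃ M : ℝ, ∀ x, wolff N (2/3) 3 (fun y => (f y) ^ 2) x R₀ ≤ M) :
    ∀ ε > 0, ∃ δ > 0, ∀ R : ℝ, 0 < R → R < δ →
      ∀ x, wolff N 1 p (fun y => |f y| ^ q) x R < ε := by
  obtain ⟨M, hM⟩ := hbdd
  have hsq0 : 0 ≤ fun y => f y ^ 2 := fun y => sq_nonneg (f y)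
  obtain ⟨C, hC, hmorrey⟩ :=
    exists_setIntegral_ball_le_of_forall_wolff_le (by norm_num) (by norm_num) hsq0 hf2 hR₀ hM
  have habs : (fun y => |f y| ^ q) = fun y => (f y ^ 2) ^ (q / 2) := by
    funext y
    rw [← sq_abs, ← Real.rpow_natCast, ← Real.rpow_mul (abs_nonneg _)]
    congr 1
    ring
  rw [habs]
  refine memKato_of_setIntegral_ball_le (γ := q)
    (C := C ^ (q / 2) * volume.real (closedBall (0 : EuclideanSpace ℝ (Fin N)) 1) ^ (1 - q / 2))
    (by linarith) (by linarith) (fun y => by positivity) (by positivity : 0 < R₀ / 4)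
    (by positivity) fun x r hr hrR => ?_
  have := setIntegral_ball_rpow_le (s := q / 2) (by linarith) (by linarith) hsq0 hf2 hr hC
    (hmorrey x r hr (by linarith))
  convert this using 3
  ring

/-- If `sup_x W_{2/3,3}^{f²}(x,R₀) < ∞` for some `R₀ > 0` and `p > 2`, `1 ≤ q < 2`,
then `|f|^q` is in the nonlinear Kato class `K_p`: `lim_{R→0} sup_x W_p^{|f|^q}(x,R) = 0`. -/
theorem abs_pow_mem_kato {N : ℕ} (hN : 1 ≤ N) (p q : ℝ) (hp : 2 < p)
    (hq1 : 1 ≤ q) (hq2 : q < 2)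
    (f : EuclideanSpace ℝ (Fin N) → ℝ) (hf : Measurable f)
    (hf2 : LocallyIntegrable (fun y => (f y) ^ 2))
    (R₀ : ℝ) (hR₀ : 0 < R₀)
    (hbdd : ∃ M : ℝ, ∀ x, wolff N (2/3) 3 (fun y => (f y) ^ 2) x R₀ ≤ M) :
    ∀ ε > 0, ∃ δ > 0, ∀ R : ℝ, 0 < R → R < δ →
      ∀ x, wolff N 1 p (fun y => |f y| ^ q) x R < ε :=
  abs_pow_mem_kato_general p q hp hq1 hq2 f hf2 R₀ hR₀ hbdd
end

section
/- Let N ≥ 1, p ≥ 2, c₀ > 0 and f₁, g₁ ≥ 0 be real numbers, and set p' = p/(p−1). Let A : ℝ × ℝ^N → ℝ^N be continuously differentiable and suppose that for all (u, z) ∈ ℝ × ℝ^N: (i) ⟨∂_z A(u,z) μ, μ⟩ ≥ c₀ |z|^{p−2} |μ|² for all μ ∈ ℝ^N, and (ii) the operator norm of ∂_u A(u,z) is at most g₁ |z|^{p−2} + f₁. Then there exist constants c_p > 0 and Γ_p > 0, depending only on p and c₀, such that for all μ, μ̃ ∈ ℝ and all η, η̃ ∈ ℝ^N: ⟨A(μ,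 η) − A(μ̃, η̃), η − η̃⟩ ≥ c_p (|η| + |η̃|)^{p−2} |η − η̃|² − Γ_p ( f₁^{p'} |μ − μ̃|^{p'} + g₁² |η̃|^{p−2} |μ − μ̃|² + g₁² |η − η̃|^{p−2} |μ − μ̃|² ). -/
open MeasureTheory Set
open scoped RealInnerProductSpace

/-!
Put `a = μ - μ'`, `b = η - η'` and integrate the derivative of `A` along the segment from
`(μ', η')` to `(μ, η)`. The `z`-derivative contributes at least `c₀ ‖b‖² W`, where `W` is the mean
of `‖η' + s b‖^(p-2)` over `s ∈ [0, 1]`, and the `u`-derivative at most `(g₁ W + f₁) |a| ‖b‖`.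
The weight `W` is comparable to `(‖η‖ + ‖η'‖)^(p-2)`: it is at most that, and at least a fixed
fraction of it, because on the last quarter of the segment (oriented towards the longer endpoint)
the point stays at norm at least `(‖η‖ + ‖η'‖) / 4`. The `g₁`-term is then absorbed by AM-GM and
the `f₁`-term by Young's inequality with exponents `p, p'`, using
`‖b‖^p ≤ (‖η‖ + ‖η'‖)^(p-2) ‖b‖²`.
-/

theorem Real.add_rpow_le_two_rpow_mul_rpow_add_rpow {x y r : ℝ} (hx : 0 ≤ x) (hy : 0 ≤ y)
    (hr : 0 ≤ r) : (x + y) ^ r ≤ 2 ^ r * (x ^ r + y ^ r) := calc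
  (x + y) ^ r ≤ (2 * max x y) ^ r := by gcongr; rw [two_mul]; gcongr <;> simp
  _ = 2 ^ r * max x y ^ r := Real.mul_rpow zero_le_two (le_max_of_le_left hx)
  _ ≤ 2 ^ r * (x ^ r + y ^ r) := by
    gcongr
    rcases max_choice x y with h | h <;> rw [h]
    · exact le_add_of_nonneg_right (Real.rpow_nonneg hy r)
    · exact le_add_of_nonneg_left (Real.rpow_nonneg hx r)

theorem Real.young_inequality_with_eps {x y p ε : ℝ} (hx : 0 ≤ x) (hy : 0 ≤ y)
    (hp : 1 < p) (hε : 0 < ε) :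
    x * y ≤ ε * x ^ p + ε ^ (-(1 / (p - 1))) * y ^ (p / (p - 1)) := by
  set q := p / (p - 1)
  have hpq : p.HolderConjugate q := Real.HolderConjugate.conjExponent hp
  set t := ε ^ (1 / p)
  have ht : 0 < t := Real.rpow_pos_of_pos hε _
  have htp : t ^ p = ε := by
    rw [← Real.rpow_mul hε.le, one_div_mul_cancel hpq.ne_zero, Real.rpow_one]
  have htq : (t ^ q)⁻¹ = ε ^ (-(1 / (p - 1))) := by
    rw [← Real.rpow_mul hε.le, ← Real.rpow_neg hε.le]
    congr 2
    simp only [q]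
    field_simp [hpq.ne_zero, hpq.sub_one_ne_zero]
  calc x * y = (t * x) * (y / t) := by field_simp
    _ ≤ (t * x) ^ p / p + (y / t) ^ q / q :=
      Real.young_inequality_of_nonneg (by positivity) (by positivity) hpq
    _ ≤ (t * x) ^ p + (y / t) ^ q := by
      gcongr
      · exact div_le_self (by positivity) hpq.lt.le
      · exact div_le_self (by positivity) hpq.symm.lt.le
    _ = ε * x ^ p + ε ^ (-(1 / (p - 1))) * y ^ q := by
      rw [Real.mul_rpow ht.le hx, htp, Real.div_rpow hy ht.le, ← htq, div_eq_inv_mul]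

theorem norm_sub_rpow_le_mul_sq {E : Type*} [SeminormedAddCommGroup E] {p : ℝ} (hp : 2 ≤ p)
    (x y : E) : ‖x - y‖ ^ p ≤ (‖x‖ + ‖y‖) ^ (p - 2) * ‖x - y‖ ^ 2 := calc
  ‖x - y‖ ^ p = ‖x - y‖ ^ (p - 2) * ‖x - y‖ ^ 2 := by
    rw [← Real.rpow_two, ← Real.rpow_add' (norm_nonneg _) (by linarith), sub_add_cancel]
  _ ≤ (‖x‖ + ‖y‖) ^ (p - 2) * ‖x - y‖ ^ 2 := by
    gcongr
    exact norm_sub_le x y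

theorem add_norm_rpow_le_four_rpow_mul {E : Type*} [SeminormedAddCommGroup E] {r : ℝ}
    (hr : 0 ≤ r) (x y : E) :
    (‖x‖ + ‖y‖) ^ r ≤ 4 ^ r * (‖y‖ ^ r + ‖x - y‖ ^ r) := calc
  (‖x‖ + ‖y‖) ^ r ≤ (2 * ‖y‖ + 2 * ‖x - y‖) ^ r := by
    refine Real.rpow_le_rpow (by positivity) ?_ hr
    linarith [norm_le_insert' x y, norm_nonneg (x - y)]
  _ ≤ 2 ^ r * ((2 * ‖y‖) ^ r + (2 * ‖x - y‖) ^ r) :=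
    Real.add_rpow_le_two_rpow_mul_rpow_add_rpow (by positivity) (by positivity) hr
  _ = 4 ^ r * (‖y‖ ^ r + ‖x - y‖ ^ r) := by
    rw [Real.mul_rpow zero_le_two (norm_nonneg _), Real.mul_rpow zero_le_two (norm_nonneg _),
      show (4 : ℝ) = 2 * 2 by norm_num, Real.mul_rpow zero_le_two zero_le_two]
    ring

section Segment

variable {E : Type*} [NormedAddCommGroup E] [NormedSpace ℝ E]

theorem norm_add_smul_sub_le_add_norm {x y : E} {s : ℝ} (hs : s ∈ Icc (0 : ℝ) 1) :
    ‖y + s • (x - y)‖ ≤ ‖x‖ + ‖y‖ := calc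
  ‖y + s • (x - y)‖ = ‖s • x + (1 - s) • y‖ := by congr 1; module
  _ ≤ s * ‖x‖ + (1 - s) * ‖y‖ := by
    refine (norm_add_le _ _).trans_eq ?_
    rw [norm_smul, norm_smul, Real.norm_of_nonneg hs.1, Real.norm_of_nonneg (sub_nonneg.2 hs.2)]
  _ ≤ ‖x‖ + ‖y‖ := by nlinarith [hs.1, hs.2, norm_nonneg x, norm_nonneg y]

theorem add_norm_div_four_le_norm_add_smul_sub {x y : E} (hxy : ‖y‖ ≤ ‖x‖) {s : ℝ}
    (hs : s ∈ Icc (3 / 4 : ℝ) 1) : (‖x‖ + ‖y‖) / 4 ≤ ‖y + s • (x - y)‖ := calc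
  (‖x‖ + ‖y‖) / 4 ≤ s * ‖x‖ - (1 - s) * ‖y‖ := by nlinarith [hs.1, hs.2, norm_nonneg y]
  _ = ‖s • x‖ - ‖(1 - s) • y‖ := by
    rw [norm_smul, norm_smul, Real.norm_of_nonneg (by linarith [hs.1]),
      Real.norm_of_nonneg (sub_nonneg.2 hs.2)]
  _ ≤ ‖s • x + (1 - s) • y‖ := norm_sub_le_norm_add _ _
  _ = ‖y + s • (x - y)‖ := by congr 1; module

theorem integral_comp_add_smul_sub_comm (g : E → ℝ) (x y : E) :
    ∫ s in (0 : ℝ)..1, g (y + s • (x - y)) = ∫ s in (0 : ℝ)..1, g (x + s • (y - x)) := by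
  have hflip (s : ℝ) : y + s • (x - y) = x + (1 - s) • (y - x) := by module
  simp only [hflip, intervalIntegral.integral_comp_sub_left fun s => g (x + s • (y - x)),
    sub_self, sub_zero]

theorem integral_norm_add_smul_sub_rpow_le {r : ℝ} (hr : 0 ≤ r) (x y : E) :
    ∫ s in (0 : ℝ)..1, ‖y + s • (x - y)‖ ^ r ≤ (‖x‖ + ‖y‖) ^ r := by
  have hcont : Continuous fun s : ℝ => ‖y + s • (x - y)‖ ^ r := by fun_prop (disch := exact hr)
  simpa using intervalIntegral.integral_mono_on zero_le_one
    (hcont.intervalIntegrable (μ := volume) 0 1) intervalIntegrable_const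
    fun s hs => Real.rpow_le_rpow (norm_nonneg _) (norm_add_smul_sub_le_add_norm hs) hr

theorem rpow_div_four_rpow_le_integral_norm_add_smul_sub_rpow {r : ℝ} (hr : 0 ≤ r) (x y : E) :
    (‖x‖ + ‖y‖) ^ r / 4 ^ (r + 1) ≤ ∫ s in (0 : ℝ)..1, ‖y + s • (x - y)‖ ^ r := by
  wlog hxy : ‖y‖ ≤ ‖x‖ generalizing x y
  · rw [add_comm, integral_comp_add_smul_sub_comm (‖·‖ ^ r)]
    exact this y x (le_of_not_ge hxy)
  have hcont : Continuous fun s : ℝ => ‖y + s • (x - y)‖ ^ r := by fun_prop (disch := exact hr)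
  calc (‖x‖ + ‖y‖) ^ r / 4 ^ (r + 1) = (1 - 3 / 4) * ((‖x‖ + ‖y‖) / 4) ^ r := by
        rw [Real.div_rpow (by positivity) zero_le_four, Real.rpow_add_one four_ne_zero]
        ring
    _ ≤ ∫ s in (3 / 4 : ℝ)..1, ‖y + s • (x - y)‖ ^ r := by
        simpa using intervalIntegral.integral_mono_on (by norm_num) intervalIntegrable_const
          (hcont.intervalIntegrable (μ := volume) _ _) fun s hs =>
            Real.rpow_le_rpow (by positivity) (add_norm_div_four_le_norm_add_smul_sub hxy hs) hr
    _ ≤ ∫ s in (0 : ℝ)..1, ‖y + s • (x - y)‖ ^ r :=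
        intervalIntegral.integral_mono_interval (by norm_num) (by norm_num) le_rfl
          (ae_of_all _ fun _ => Real.rpow_nonneg (norm_nonneg _) r) (hcont.intervalIntegrable _ _)

end Segment

theorem fderiv_uncurry_apply {E₁ E₂ F : Type*} [NormedAddCommGroup E₁] [NormedSpace ℝ E₁]
    [NormedAddCommGroup E₂] [NormedSpace ℝ E₂] [NormedAddCommGroup F] [NormedSpace ℝ F]
    {A : E₁ → E₂ → F} {u : E₁} {z : E₂}
    (hA : DifferentiableAt ℝ (fun q : E₁ × E₂ => A q.1 q.2) (u, z)) (a : E₁) (b : E₂) :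
    fderiv ℝ (fun q : E₁ × E₂ => A q.1 q.2) (u, z) (a, b)
      = fderiv ℝ (fun v => A v z) u a + fderiv ℝ (fun w => A u w) z b := by
  set L := fderiv ℝ (fun q : E₁ × E₂ => A q.1 q.2) (u, z)
  have hleft : HasFDerivAt (fun v => A v z) (L.comp (.inl ℝ E₁ E₂)) u :=
    hA.hasFDerivAt.comp (f := fun v => (v, z)) u (hasFDerivAt_prodMk_left u z)
  have hright : HasFDerivAt (fun w => A u w) (L.comp (.inr ℝ E₁ E₂)) z :=
    hA.hasFDerivAt.comp (f := fun w => (u, w)) z (hasFDerivAt_prodMk_right u z)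
  rw [hleft.fderiv, hright.fderiv]
  exact (ContinuousLinearMap.comp_inl_add_comp_inr _ (a, b)).symm

theorem integral_le_inner_sub_of_le_inner_fderiv {E F : Type*} [NormedAddCommGroup E]
    [NormedSpace ℝ E] [NormedAddCommGroup F] [InnerProductSpace ℝ F] {G : E → F}
    (hG : ContDiff ℝ 1 G) (x y : E) (w : F) {φ : ℝ → ℝ} (hφ : IntervalIntegrable φ volume 0 1)
    (hφG : ∀ s ∈ Icc (0 : ℝ) 1, φ s ≤ ⟪fderiv ℝ G (y + s • (x - y)) (x - y), w⟫) :
    ∫ s in (0 : ℝ)..1, φ s ≤ ⟪G x - G y, w⟫ := by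
  have hderiv (s : ℝ) : HasDerivAt (fun t : ℝ => ⟪G (y + t • (x - y)), w⟫)
      ⟪fderiv ℝ G (y + s • (x - y)) (x - y), w⟫ s := by
    have hline : HasDerivAt (fun t : ℝ => y + t • (x - y)) (x - y) s := by
      simpa using ((hasDerivAt_id s).smul_const (x - y)).const_add y
    simpa using ((hG.differentiable one_ne_zero _).hasFDerivAt.comp_hasDerivAt s hline).inner ℝ
      (hasDerivAt_const s w)
  have hcont : Continuous fun s : ℝ => ⟪fderiv ℝ G (y + s • (x - y)) (x - y), w⟫ := by
    have := hG.continuous_fderiv one_ne_zero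
    fun_prop
  have hFTC := intervalIntegral.integral_eq_sub_of_hasDerivAt (fun s _ => hderiv s)
    (hcont.intervalIntegrable 0 1)
  simp only [one_smul, zero_smul, add_zero, add_sub_cancel] at hFTC
  rw [inner_sub_left, ← hFTC]
  exact intervalIntegral.integral_mono_on zero_le_one hφ (hcont.intervalIntegrable 0 1) hφG

theorem le_inner_sub_of_fderiv_bounds {E : Type*} [NormedAddCommGroup E] [InnerProductSpace ℝ E]
    {A : ℝ → E → E} (hA : ContDiff ℝ 1 fun q : ℝ × E => A q.1 q.2) {ω : E → ℝ}
    (hω : Continuous ω) {c₀ f₁ g₁ : ℝ}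
    (hmono : ∀ (u : ℝ) (z μ : E), c₀ * ω z * ‖μ‖ ^ 2 ≤ ⟪fderiv ℝ (fun w => A u w) z μ, μ⟫)
    (hgrow : ∀ (u : ℝ) (z : E), ‖fderiv ℝ (fun v => A v z) u‖ ≤ g₁ * ω z + f₁)
    (μ μ' : ℝ) (η η' : E) :
    (c₀ * ‖η - η'‖ ^ 2 - g₁ * (|μ - μ'| * ‖η - η'‖)) * (∫ s in (0 : ℝ)..1, ω (η' + s • (η - η')))
      - f₁ * (|μ - μ'| * ‖η - η'‖) ≤ ⟪A μ η - A μ' η', η - η'⟫ := by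
  set a := μ - μ'
  set b := η - η'
  have hbound (s : ℝ) :
      (c₀ * ‖b‖ ^ 2 - g₁ * (|a| * ‖b‖)) * ω (η' + s • b) - f₁ * (|a| * ‖b‖)
        ≤ ⟪fderiv ℝ (fun q : ℝ × E => A q.1 q.2) (μ' + s * a, η' + s • b) (a, b), b⟫ := by
    set u := μ' + s * a
    set z := η' + s • b
    rw [fderiv_uncurry_apply (hA.differentiable one_ne_zero _), inner_add_left]
    have hz := hmono u z b
    have hu : |⟪fderiv ℝ (fun v => A v z) u a, b⟫| ≤ (g₁ * ω z + f₁) * (|a| * ‖b‖) := calc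
      _ ≤ ‖fderiv ℝ (fun v => A v z) u‖ * ‖a‖ * ‖b‖ :=
        (abs_real_inner_le_norm _ _).trans (by gcongr; exact ContinuousLinearMap.le_opNorm _ _)
      _ ≤ (g₁ * ω z + f₁) * (|a| * ‖b‖) := by
        rw [Real.norm_eq_abs, mul_assoc]; gcongr; exact hgrow u z
    linarith [neg_abs_le ⟪fderiv ℝ (fun v => A v z) u a, b⟫]
  have hωs : Continuous fun s : ℝ => ω (η' + s • b) := by fun_prop
  have hlhs : (c₀ * ‖b‖ ^ 2 - g₁ * (|a| * ‖b‖)) * (∫ s in (0 : ℝ)..1, ω (η' + s • b))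
      - f₁ * (|a| * ‖b‖) = ∫ s in (0 : ℝ)..1,
        ((c₀ * ‖b‖ ^ 2 - g₁ * (|a| * ‖b‖)) * ω (η' + s • b) - f₁ * (|a| * ‖b‖)) := by
    rw [intervalIntegral.integral_sub, intervalIntegral.integral_const_mul,
      intervalIntegral.integral_const, sub_zero, one_smul]
    · exact (hωs.intervalIntegrable 0 1).const_mul _
    · exact intervalIntegrable_const
  rw [hlhs]
  refine integral_le_inner_sub_of_le_inner_fderiv hA (μ, η) (μ', η') b ?_ fun s _ => ?_
  · exact ((continuous_const.mul hωs).sub continuous_const).intervalIntegrable 0 1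
  · simpa using hbound s

theorem le_inner_sub_of_fderiv_rpow_bounds {E : Type*} [NormedAddCommGroup E]
    [InnerProductSpace ℝ E] {A : ℝ → E → E} (hA : ContDiff ℝ 1 fun q : ℝ × E => A q.1 q.2)
    {r c₀ f₁ g₁ : ℝ} (hr : 0 ≤ r) (hc₀ : 0 < c₀)
    (hmono : ∀ (u : ℝ) (z μ : E), c₀ * ‖z‖ ^ r * ‖μ‖ ^ 2 ≤ ⟪fderiv ℝ (fun w => A u w) z μ, μ⟫)
    (hgrow : ∀ (u : ℝ) (z : E), ‖fderiv ℝ (fun v => A v z) u‖ ≤ g₁ * ‖z‖ ^ r + f₁)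
    (μ μ' : ℝ) (η η' : E) :
    c₀ / (2 * 4 ^ (r + 1)) * (‖η‖ + ‖η'‖) ^ r * ‖η - η'‖ ^ 2
      - g₁ ^ 2 / (2 * c₀) * (‖η‖ + ‖η'‖) ^ r * |μ - μ'| ^ 2 - f₁ * (|μ - μ'| * ‖η - η'‖)
      ≤ ⟪A μ η - A μ' η', η - η'⟫ := by
  have hX := le_inner_sub_of_fderiv_bounds hA (continuous_norm.rpow_const fun _ => Or.inr hr)
    hmono hgrow μ μ' η η'
  have hWS := integral_norm_add_smul_sub_rpow_le hr η η'
  have hSW := rpow_div_four_rpow_le_integral_norm_add_smul_sub_rpow hr η η'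
  set α := |μ - μ'|
  set β := ‖η - η'‖
  set S := (‖η‖ + ‖η'‖) ^ r
  set W := ∫ s in (0 : ℝ)..1, ‖η' + s • (η - η')‖ ^ r
  have hW : 0 ≤ W := (by positivity : 0 ≤ S / 4 ^ (r + 1)).trans hSW
  have hAMGM : g₁ * (α * β) ≤ c₀ / 2 * β ^ 2 + g₁ ^ 2 / (2 * c₀) * α ^ 2 := by
    field_simp
    nlinarith [sq_nonneg (c₀ * β - g₁ * α)]
  calc _ = c₀ / 2 * β ^ 2 * (S / 4 ^ (r + 1)) - g₁ ^ 2 / (2 * c₀) * α ^ 2 * S - f₁ * (α * β) := by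
        ring
    _ ≤ c₀ / 2 * β ^ 2 * W - g₁ ^ 2 / (2 * c₀) * α ^ 2 * W - f₁ * (α * β) := by gcongr
    _ ≤ (c₀ * β ^ 2 - g₁ * (α * β)) * W - f₁ * (α * β) := by
        linear_combination mul_le_mul_of_nonneg_right hAMGM hW
    _ ≤ _ := hX

theorem vector_field_monotonicity_general {N : ℕ} (p c₀ : ℝ)
    (hp : 2 ≤ p) (hc₀ : 0 < c₀) :
    ∃ cp > 0, ∃ Γp > 0, ∀ f₁ g₁ : ℝ, 0 ≤ f₁ → 0 ≤ g₁ →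
      ∀ A : ℝ → EuclideanSpace ℝ (Fin N) → EuclideanSpace ℝ (Fin N),
        ContDiff ℝ 1 (fun q : ℝ × EuclideanSpace ℝ (Fin N) => A q.1 q.2) →
        (∀ (u : ℝ) (z μ : EuclideanSpace ℝ (Fin N)),
          c₀ * ‖z‖ ^ (p-2) * ‖μ‖ ^ 2 ≤ ⟪fderiv ℝ (fun w => A u w) z μ, μ⟫) →
        (∀ (u : ℝ) (z : EuclideanSpace ℝ (Fin N)),
          ‖fderiv ℝ (fun v => A v z) u‖ ≤ g₁ * ‖z‖ ^ (p-2) + f₁) →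
        ∀ (μ μ' : ℝ) (η η' : EuclideanSpace ℝ (Fin N)),
          cp * (‖η‖ + ‖η'‖) ^ (p-2) * ‖η - η'‖ ^ 2
            - Γp * (f₁ ^ (p/(p-1)) * |μ - μ'| ^ (p/(p-1))
                + g₁ ^ 2 * ‖η'‖ ^ (p-2) * |μ - μ'| ^ 2
                + g₁ ^ 2 * ‖η - η'‖ ^ (p-2) * |μ - μ'| ^ 2)
          ≤ ⟪A μ η - A μ' η', η - η'⟫ := by
  have hr : 0 ≤ p - 2 := by linarith
  set ε := c₀ / (4 * 4 ^ (p - 1))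
  refine ⟨ε, by positivity, 4 ^ (p - 2) / (2 * c₀) + ε ^ (-(1 / (p - 1))), by positivity, ?_⟩
  intro f₁ g₁ hf₁ _ A hA hmono hgrow μ μ' η η'
  have hX := le_inner_sub_of_fderiv_rpow_bounds hA hr hc₀ hmono hgrow μ μ' η η'
  have hS := add_norm_rpow_le_four_rpow_mul hr η η'
  have hβ := norm_sub_rpow_le_mul_sq hp η η'
  have hYoung := Real.young_inequality_with_eps (norm_nonneg (η - η'))
    (mul_nonneg hf₁ (abs_nonneg (μ - μ'))) (by linarith : 1 < p) (by positivity : 0 < ε)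
  rw [show p - 2 + 1 = p - 1 by ring] at hX
  rw [Real.mul_rpow hf₁ (abs_nonneg _)] at hYoung
  set α := |μ - μ'|
  set β := ‖η - η'‖
  set S := (‖η‖ + ‖η'‖) ^ (p - 2)
  set Γ := ε ^ (-(1 / (p - 1)))
  refine le_trans ?_ hX
  have hSα := mul_le_mul_of_nonneg_left hS (by positivity : 0 ≤ g₁ ^ 2 / (2 * c₀) * α ^ 2)
  have hεβ := mul_le_mul_of_nonneg_left hβ (by positivity : 0 ≤ ε)
  have hF : 0 ≤ 4 ^ (p - 2) / (2 * c₀) * (f₁ ^ (p / (p - 1)) * α ^ (p / (p - 1))) := by positivity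
  have hGH : 0 ≤ Γ * (g₁ ^ 2 * ‖η'‖ ^ (p - 2) * α ^ 2 + g₁ ^ 2 * β ^ (p - 2) * α ^ 2) := by
    positivity
  linear_combination hSα + hεβ + hYoung + hF + hGH

/-- Lemma 3.1: monotonicity-type estimate (3.1) for a vector field `A(u,z)`
satisfying the differentiated structure conditions. -/
theorem vector_field_monotonicity {N : ℕ} (hN : 1 ≤ N) (p c₀ : ℝ)
    (hp : 2 ≤ p) (hc₀ : 0 < c₀) :
    ∃ cp > 0, ∃ Γp > 0, ∀ f₁ g₁ : ℝ, 0 ≤ f₁ → 0 ≤ g₁ →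
      ∀ A : ℝ → EuclideanSpace ℝ (Fin N) → EuclideanSpace ℝ (Fin N),
        ContDiff ℝ 1 (fun q : ℝ × EuclideanSpace ℝ (Fin N) => A q.1 q.2) →
        (∀ (u : ℝ) (z μ : EuclideanSpace ℝ (Fin N)),
          c₀ * ‖z‖ ^ (p-2) * ‖μ‖ ^ 2 ≤ ⟪fderiv ℝ (fun w => A u w) z μ, μ⟫) →
        (∀ (u : ℝ) (z : EuclideanSpace ℝ (Fin N)),
          ‖fderiv ℝ (fun v => A v z) u‖ ≤ g₁ * ‖z‖ ^ (p-2) + f₁) →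
        ∀ (μ μ' : ℝ) (η η' : EuclideanSpace ℝ (Fin N)),
          cp * (‖η‖ + ‖η'‖) ^ (p-2) * ‖η - η'‖ ^ 2
            - Γp * (f₁ ^ (p/(p-1)) * |μ - μ'| ^ (p/(p-1))
                + g₁ ^ 2 * ‖η'‖ ^ (p-2) * |μ - μ'| ^ 2
                + g₁ ^ 2 * ‖η - η'‖ ^ (p-2) * |μ - μ'| ^ 2)
          ≤ ⟪A μ η - A μ' η', η - η'⟫ :=
  vector_field_monotonicity_general p c₀ hp hc₀
end

section
/- Let p ≥ 2, let f, g ≥ 0 and u ∈ ℝ be real numbers, let η, η̃ ∈ ℝ^N, and let b ∈ ℝ satisfy |b| ≤ g|η|^{p−1} + f(1 + |u|^{p−1}). Set K := f(1 + |u|^{p−1}) + g(2|η̃|)^{p−1} and let b̄ := max(−K, min(b, K)) be the truncation of b at level K. Then |b − b̄| ≤ 2^{p−1} g |η − η̃|^{p−1}. -/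
/-!
Clamping `b` to `[-K, K]` moves it by at most `max (|b| - K) 0`, and by the hypothesis on `b`
the excess `|b| - K` is at most `g (|η|^{p-1} - (2|η̃|)^{p-1})`, the `f`-terms cancelling.
Since `|η| ≤ |η̃| + |η - η̃| ≤ 2 max(|η̃|, |η - η̃|)`, this is at most `g (2|η - η̃|)^{p-1}`.
-/

theorem abs_sub_clamp_le (b K : ℝ) : |b - max (-K) (min b K)| ≤ max (|b| - K) 0 := by
  rcases le_total b K with hbK | hKb
  · rcases le_total (-K) b with hKb' | hbK'
    · rw [min_eq_left hbK, max_eq_right hKb', sub_self, abs_zero]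
      exact le_max_right _ _
    · rw [min_eq_left hbK, max_eq_left hbK']
      exact le_max_of_le_left (by cases abs_cases (b - -K) <;> cases abs_cases b <;> linarith)
  · rw [min_eq_right hKb]
    exact le_max_of_le_left (by cases abs_cases b <;> grind)

theorem rpow_le_rpow_two_mul_add_rpow_two_mul {a b c q : ℝ} (ha : 0 ≤ a) (hb : 0 ≤ b)
    (hc : 0 ≤ c) (hq : 0 ≤ q) (habc : a ≤ b + c) : a ^ q ≤ (2 * b) ^ q + (2 * c) ^ q := by
  have hb' : 0 ≤ (2 * b) ^ q := by positivity
  have hc' : 0 ≤ (2 * c) ^ q := by positivity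
  rcases le_total b c with hbc | hcb
  · linarith [Real.rpow_le_rpow ha (show a ≤ 2 * c by linarith) hq]
  · linarith [Real.rpow_le_rpow ha (show a ≤ 2 * b by linarith) hq]

theorem truncation_estimate_general {N : ℕ} (p f g u b : ℝ)
    (η η' : EuclideanSpace ℝ (Fin N)) (hp : 2 ≤ p) (hg : 0 ≤ g)
    (hb : |b| ≤ g * ‖η‖ ^ (p-1) + f * (1 + |u| ^ (p-1))) :
    |b - max (-(f * (1 + |u| ^ (p-1)) + g * (2 * ‖η'‖) ^ (p-1)))
        (min b (f * (1 + |u| ^ (p-1)) + g * (2 * ‖η'‖) ^ (p-1)))|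
      ≤ 2 ^ (p-1) * g * ‖η - η'‖ ^ (p-1) := by
  have hq : 0 ≤ p - 1 := by linarith
  have hη : ‖η‖ ^ (p-1) - (2 * ‖η'‖) ^ (p-1) ≤ 2 ^ (p-1) * ‖η - η'‖ ^ (p-1) := by
    rw [← Real.mul_rpow zero_le_two (norm_nonneg _)]
    linarith [rpow_le_rpow_two_mul_add_rpow_two_mul (norm_nonneg _) (norm_nonneg _)
      (norm_nonneg _) hq (norm_le_norm_add_norm_sub' η η')]
  have hexcess : g * ‖η‖ ^ (p-1) - g * (2 * ‖η'‖) ^ (p-1) ≤ 2 ^ (p-1) * g * ‖η - η'‖ ^ (p-1) :=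
    calc g * ‖η‖ ^ (p-1) - g * (2 * ‖η'‖) ^ (p-1)
        = g * (‖η‖ ^ (p-1) - (2 * ‖η'‖) ^ (p-1)) := by ring
      _ ≤ g * (2 ^ (p-1) * ‖η - η'‖ ^ (p-1)) := mul_le_mul_of_nonneg_left hη hg
      _ = 2 ^ (p-1) * g * ‖η - η'‖ ^ (p-1) := by ring
  refine (abs_sub_clamp_le _ _).trans (max_le (by linarith) ?_)
  positivity

/-- Truncation estimate from the proof of Proposition 3.2: if
`|b| ≤ g|η|^{p-1} + f(1+|u|^{p-1})` and `b̄` is the truncation of `b` at level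
`K = f(1+|u|^{p-1}) + g(2|η̃|)^{p-1}`, then `|b - b̄| ≤ 2^{p-1} g |η - η̃|^{p-1}`. -/
theorem truncation_estimate {N : ℕ} (p f g u b : ℝ)
    (η η' : EuclideanSpace ℝ (Fin N)) (hp : 2 ≤ p) (hf : 0 ≤ f) (hg : 0 ≤ g)
    (hb : |b| ≤ g * ‖η‖ ^ (p-1) + f * (1 + |u| ^ (p-1))) :
    |b - max (-(f * (1 + |u| ^ (p-1)) + g * (2 * ‖η'‖) ^ (p-1)))
        (min b (f * (1 + |u| ^ (p-1)) + g * (2 * ‖η'‖) ^ (p-1)))|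
      ≤ 2 ^ (p-1) * g * ‖η - η'‖ ^ (p-1) :=
  truncation_estimate_general p f g u b η η' hp hg hb
end

section
/- Let (X, μ) be a measure space, let N ≥ 1 and α > 0, and let ξ_n : X → ℝ^N be a sequence of measurable functions. Suppose that for every positive integer m, the sequence of functions x ↦ ξ_n(x) · ( |ξ_n(x)| − 1/m )₊^α converges in ℝ^N for μ-almost every x ∈ X as n → ∞. Then there exists a measurable function ξ : X → ℝ^N such that ξ_n(x) → ξ(x) for μ-almost every x ∈ X as n → ∞. -/
/-!
Write `h_c(t) = (t - c)₊^α t`, so that the norm of the `m`-th truncated sequence is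
`h_{1/m}(|ξ_n|)`. If one of the limits `L` is nonzero, then, `h_c` being an increasing
continuous bijection of `[c, ∞)` onto `[0, ∞)`, `|ξ_n|` converges to the point `r > c` with
`h_c(r) = |L|`; dividing by the weight `(|ξ_n| - c)₊^α → (r - c)^α > 0` gives
`ξ_n → (r - c)^(-α) L`. If all the limits vanish, `h_{1/m}(|ξ_n|) → 0` for every `m` forces
`ξ_n → 0`. An a.e. limit of measurable maps into a metrizable space has a measurable version.
-/

open MeasureTheory Filter Set
open scoped Topology

lemma tendsto_of_tendsto_comp_of_strictMonoOn {ι β γ : Type*} [LinearOrder β]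
    [TopologicalSpace β] [OrderTopology β] [LinearOrder γ] [TopologicalSpace γ] [OrderTopology γ]
    {l : Filter ι} {h : β → γ} {c r : β} {x : ι → β}
    (hh : StrictMonoOn h (Ici c)) (hr : c < r) (hx : ∀ᶠ n in l, c ≤ x n)
    (hlim : Tendsto (fun n => h (x n)) l (𝓝 (h r))) :
    Tendsto x l (𝓝 r) := by
  refine tendsto_order.2 ⟨fun a ha => ?_, fun b hb => ?_⟩
  · have hlt : h (max a c) < h r := hh (le_max_right a c) hr.le (max_lt ha hr)
    filter_upwards [hlim.eventually (lt_mem_nhds hlt), hx] with n hn hcn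
    by_contra! hna
    exact (hh.monotoneOn hcn (le_max_right a c) (hna.trans (le_max_left a c))).not_gt hn
  · have hlt : h r < h b := hh hr.le (hr.trans hb).le hb
    filter_upwards [hlim.eventually (gt_mem_nhds hlt), hx] with n hn hcn
    by_contra! hbn
    exact (hh.monotoneOn (hr.trans hb).le hcn hbn).not_gt hn

section TruncatedPower

variable {c α : ℝ}

lemma monotoneOn_truncPow_mul (hα : 0 ≤ α) :
    MonotoneOn (fun t : ℝ => (max (t - c) 0) ^ α * t) (Ici 0) := by
  intro s hs t _ hst
  have hpow : (max (s - c) 0) ^ α ≤ (max (t - c) 0) ^ α :=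
    Real.rpow_le_rpow (le_max_right _ _) (max_le_max_right 0 (by linarith)) hα
  exact mul_le_mul hpow hst hs (Real.rpow_nonneg (le_max_right _ _) _)

lemma strictMonoOn_truncPow_mul (hc : 0 ≤ c) (hα : 0 < α) :
    StrictMonoOn (fun t : ℝ => (max (t - c) 0) ^ α * t) (Ici c) := by
  intro s hs t _ hst
  have hpow : (max (s - c) 0) ^ α ≤ (max (t - c) 0) ^ α :=
    Real.rpow_le_rpow (le_max_right _ _) (max_le_max_right 0 (by linarith)) hα.le
  have hpos : 0 < (max (t - c) 0) ^ α :=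
    Real.rpow_pos_of_pos (lt_max_of_lt_left (by linarith [mem_Ici.1 hs])) _
  calc (max (s - c) 0) ^ α * s ≤ (max (t - c) 0) ^ α * s :=
        mul_le_mul_of_nonneg_right hpow (hc.trans hs)
    _ < (max (t - c) 0) ^ α * t := mul_lt_mul_of_pos_left hst hpos

lemma continuous_truncPow (hα : 0 ≤ α) : Continuous (fun t : ℝ => (max (t - c) 0) ^ α) :=
  ((continuous_id.sub continuous_const).max continuous_const).rpow_const fun _ => Or.inr hα

lemma tendsto_truncPow_mul_atTop (hα : 0 ≤ α) :
    Tendsto (fun t : ℝ => (max (t - c) 0) ^ α * t) atTop atTop := by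
  refine tendsto_atTop_mono' _ ?_ tendsto_id
  filter_upwards [eventually_ge_atTop (c + 1), eventually_ge_atTop 0] with t hct ht
  have : 1 ≤ (max (t - c) 0) ^ α := Real.one_le_rpow (le_max_of_le_left (by linarith)) hα
  exact le_mul_of_one_le_left ht this

lemma exists_truncPow_mul_eq (hα : 0 < α) {y : ℝ} (hy : 0 < y) :
    ∃ r, c < r ∧ (max (r - c) 0) ^ α * r = y := by
  have hc : (max (c - c) 0) ^ α * c = 0 := by simp [Real.zero_rpow hα.ne']
  have hsurj := intermediate_value_Ioi (a := c) (f := fun t : ℝ => (max (t - c) 0) ^ α * t)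
    ((continuous_truncPow hα.le).mul continuous_id).continuousOn (tendsto_truncPow_mul_atTop hα.le)
  exact hsurj (by rwa [hc])

lemma norm_truncPow_smul {E : Type*} [NormedAddCommGroup E] [NormedSpace ℝ E] (v : E) :
    ‖(max (‖v‖ - c) 0) ^ α • v‖ = (max (‖v‖ - c) 0) ^ α * ‖v‖ := by
  rw [norm_smul, Real.norm_of_nonneg (Real.rpow_nonneg (le_max_right _ _) _)]

end TruncatedPower

section Pointwise

variable {E : Type*} [NormedAddCommGroup E] [NormedSpace ℝ E] {α : ℝ} {v : ℕ → E}

lemma exists_tendsto_of_tendsto_truncPow_smul {c : ℝ} (hc : 0 ≤ c) (hα : 0 < α) {L : E}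
    (hL : Tendsto (fun n => (max (‖v n‖ - c) 0) ^ α • v n) atTop (𝓝 L)) (hL0 : L ≠ 0) :
    ∃ L', Tendsto v atTop (𝓝 L') := by
  obtain ⟨r, hcr, hr⟩ := exists_truncPow_mul_eq (c := c) hα (norm_pos_iff.2 hL0)
  have hnorm : Tendsto (fun n => (max (‖v n‖ - c) 0) ^ α * ‖v n‖) atTop
      (𝓝 ((max (r - c) 0) ^ α * r)) := by
    simpa only [hr, norm_truncPow_smul] using hL.norm
  have hc_le : ∀ᶠ n in atTop, c ≤ ‖v n‖ := by
    filter_upwards [hnorm.eventually (eventually_gt_nhds (hr ▸ norm_pos_iff.2 hL0))] with n hn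
    by_contra! hnc
    rw [max_eq_right (by linarith), Real.zero_rpow hα.ne', zero_mul] at hn
    exact hn.false
  have hvr : Tendsto (fun n => ‖v n‖) atTop (𝓝 r) :=
    tendsto_of_tendsto_comp_of_strictMonoOn (strictMonoOn_truncPow_mul hc hα) hcr hc_le hnorm
  have hw0 : (max (r - c) 0) ^ α ≠ 0 :=
    (Real.rpow_pos_of_pos (lt_max_of_lt_left (sub_pos.2 hcr)) _).ne'
  have hw : Tendsto (fun n => (max (‖v n‖ - c) 0) ^ α) atTop (𝓝 ((max (r - c) 0) ^ α)) :=
    ((continuous_truncPow hα.le).tendsto r).comp hvr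
  refine ⟨((max (r - c) 0) ^ α)⁻¹ • L, ((hw.inv₀ hw0).smul hL).congr' ?_⟩
  filter_upwards [hvr.eventually (eventually_gt_nhds hcr)] with n hn
  exact inv_smul_smul₀ (Real.rpow_pos_of_pos (lt_max_of_lt_left (sub_pos.2 hn)) _).ne' _

lemma tendsto_zero_of_tendsto_truncPow_smul_zero (hα : 0 < α)
    (hv : ∀ m : ℕ, 0 < m →
      Tendsto (fun n => (max (‖v n‖ - 1 / (m : ℝ)) 0) ^ α • v n) atTop (𝓝 0)) :
    Tendsto v atTop (𝓝 0) := by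
  rw [tendsto_zero_iff_norm_tendsto_zero]
  refine tendsto_order.2 ⟨fun a ha => Eventually.of_forall fun n => ha.trans_le (norm_nonneg _),
    fun ε hε => ?_⟩
  obtain ⟨m, hm⟩ := exists_nat_one_div_lt hε
  set c : ℝ := 1 / ((m + 1 : ℕ) : ℝ)
  have hcε : c < ε := by simpa [c] using hm
  have hpos : 0 < (max (ε - c) 0) ^ α * ε :=
    mul_pos (Real.rpow_pos_of_pos (lt_max_of_lt_left (sub_pos.2 hcε)) _) hε
  have hlim := (hv (m + 1) m.succ_pos).norm
  rw [norm_zero] at hlim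
  filter_upwards [hlim.eventually (eventually_lt_nhds hpos)] with n hn
  rw [norm_truncPow_smul] at hn
  by_contra! hεn
  exact (monotoneOn_truncPow_mul hα.le hε.le (norm_nonneg _) hεn).not_gt hn

lemma exists_tendsto_of_forall_exists_tendsto_truncPow_smul (hα : 0 < α)
    (hv : ∀ m : ℕ, 0 < m → ∃ L : E,
      Tendsto (fun n => (max (‖v n‖ - 1 / (m : ℝ)) 0) ^ α • v n) atTop (𝓝 L)) :
    ∃ L, Tendsto v atTop (𝓝 L) := by
  choose L hL using hv
  by_cases hzero : ∀ m (hm : 0 < m), L m hm = 0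
  · exact ⟨0, tendsto_zero_of_tendsto_truncPow_smul_zero hα fun m hm => hzero m hm ▸ hL m hm⟩
  · push Not at hzero
    obtain ⟨m, hm, hLm⟩ := hzero
    exact exists_tendsto_of_tendsto_truncPow_smul (by positivity) hα (hL m hm) hLm

end Pointwise

theorem ae_convergence_of_truncated_convergence_general
    {X : Type*} [MeasurableSpace X] (μ : Measure X) {N : ℕ}
    (α : ℝ) (hα : 0 < α)
    (ξ : ℕ → X → EuclideanSpace ℝ (Fin N)) (hmeas : ∀ n, Measurable (ξ n))
    (hconv : ∀ m : ℕ, 0 < m → ∀ᵐ x ∂μ, ∃ L : EuclideanSpace ℝ (Fin N),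
      Tendsto (fun n => (max (‖ξ n x‖ - 1/(m:ℝ)) 0) ^ α • ξ n x) atTop (nhds L)) :
    ∃ ξ' : X → EuclideanSpace ℝ (Fin N), Measurable ξ' ∧
      ∀ᵐ x ∂μ, Tendsto (fun n => ξ n x) atTop (nhds (ξ' x)) := by
  have hall : ∀ᵐ x ∂μ, ∀ m : ℕ, 0 < m → ∃ L : EuclideanSpace ℝ (Fin N),
      Tendsto (fun n => (max (‖ξ n x‖ - 1/(m:ℝ)) 0) ^ α • ξ n x) atTop (nhds L) :=
    ae_all_iff.2 fun m => eventually_imp_distrib_left.2 (hconv m)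
  exact measurable_limit_of_tendsto_metrizable_ae (fun n => (hmeas n).aemeasurable)
    (hall.mono fun x hx => exists_tendsto_of_forall_exists_tendsto_truncPow_smul hα hx)

/-- Lemma 2.12: if `ξ_n (|ξ_n| - 1/m)₊^α` converges a.e. for every `m ∈ ℕ`,
then `ξ_n` converges a.e. -/
theorem ae_convergence_of_truncated_convergence
    {X : Type*} [MeasurableSpace X] (μ : Measure X) {N : ℕ} (hN : 1 ≤ N)
    (α : ℝ) (hα : 0 < α)
    (ξ : ℕ → X → EuclideanSpace ℝ (Fin N)) (hmeas : ∀ n, Measurable (ξ n))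
    (hconv : ∀ m : ℕ, 0 < m → ∀ᵐ x ∂μ, ∃ L : EuclideanSpace ℝ (Fin N),
      Tendsto (fun n => (max (‖ξ n x‖ - 1/(m:ℝ)) 0) ^ α • ξ n x) atTop (nhds L)) :
    ∃ ξ' : X → EuclideanSpace ℝ (Fin N), Measurable ξ' ∧
      ∀ᵐ x ∂μ, Tendsto (fun n => ξ n x) atTop (nhds (ξ' x)) :=
  ae_convergence_of_truncated_convergence_general μ α hα ξ hmeas hconv
end

section
/- Let N ≥ 3 and 2 ≤ p < N. Then there exist a nonnegative, compactly supported, Lebesgue-integrable function f : ℝ^N → ℝ and constants 0 < a ≤ A < ∞ such that sup_{x ∈ ℝ^N} W_p^f(x, ∞) ≤ A, while sup_{x ∈ ℝ^N} W_p^f(x, R) ≥ a for every R > 0; in particular lim_{R → 0} sup_{x ∈ ℝ^N} W_p^f(x, R) > 0 although sup_{x ∈ ℝ^N} W_p^f(x, ∞) < ∞. -/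
open MeasureTheory Metric Set Filter
open scoped Topology

/-- The Wolff potential `W_{β,p}^f(x,∞)`. -/
noncomputable def wolffTop (N : ℕ) (β p : ℝ) (f : EuclideanSpace ℝ (Fin N) → ℝ)
    (x : EuclideanSpace ℝ (Fin N)) : ℝ :=
  ∫ r in Set.Ioi (0:ℝ),
    (1/r) * ((r ^ (β*p - (N:ℝ)) * ∫ y in Metric.ball x r, f y) ^ (1/(p-1)))

/-!
Take `f = ∑ₖ ρₖ^(-p) 𝟙_{B(cₖ, ρₖ)}` with centres `cₖ = 2^(-k) e` and radii `ρₖ = 4^(-(k+2))`.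
The Wolff potential does not see the scale of a bump of height `ρ^(-p)` on a ball of radius `ρ`:
at its centre it contributes a fixed positive amount on the radii `r ∈ (ρ, 2ρ)`, which gives the
lower bound for every `R`, and its total contribution at any point is bounded independently of `ρ`.
For the upper bound, `t ↦ t^(1/(p-1))` is subadditive because `p ≥ 2`, so the potential of `f` is
at most the sum of the potentials of the bumps. At a given point at most one bump is near, and a
bump `k` at distance at least `2^(-k-2)` contributes `O(2^(-k(N-p)/(p-1)))`, a geometric series.
The total mass `∑ₖ ρₖ^(N-p)` is finite because `p < N`.
-/

open Module
open scoped ENNReal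

theorem ENNReal.rpow_tsum_le_tsum_rpow {ι : Type*} {q : ℝ} (hq₀ : 0 < q) (hq₁ : q ≤ 1)
    (a : ι → ℝ≥0∞) : (∑' i, a i) ^ q ≤ ∑' i, a i ^ q := by
  rw [← ENNReal.le_rpow_inv_iff hq₀, ENNReal.tsum_eq_iSup_sum]
  refine iSup_le fun s => (ENNReal.le_rpow_inv_iff hq₀).2 ?_
  exact (Finset.le_sum_of_subadditive (· ^ q) (ENNReal.zero_rpow_of_pos hq₀).le
    (fun x y => ENNReal.rpow_add_le_add_rpow x y hq₀.le hq₁) s a).trans (ENNReal.sum_le_tsum s)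

theorem Set.Subsingleton.tsum_indicator_const_le {ι : Type*} {S : Set ι} (hS : S.Subsingleton)
    (c : ℝ≥0∞) : ∑' i, S.indicator (fun _ => c) i ≤ c := by
  rw [← tsum_subtype, ENNReal.tsum_set_const]
  refine mul_le_of_le_one_left zero_le ?_
  exact_mod_cast Set.encard_le_one_iff_subsingleton.2 hS

theorem lintegral_Ioc_div_rpow_div {s ρ : ℝ} (hs : 0 < s) (hρ : 0 < ρ) :
    ∫⁻ r in Ioc 0 ρ, ENNReal.ofReal ((r / ρ) ^ s / r) = ENNReal.ofReal (1 / s) := by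
  have h_eq : EqOn (fun r => (r / ρ) ^ s / r) (fun r => ρ ^ (-s) * r ^ (s - 1)) (Ioc 0 ρ) := by
    intro r hr
    simp only
    rw [Real.div_rpow hr.1.le hρ.le, Real.rpow_sub_one hr.1.ne', Real.rpow_neg hρ.le]
    ring
  have h_int : IntegrableOn (fun r : ℝ => r ^ (s - 1)) (Ioc 0 ρ) :=
    (intervalIntegral.intervalIntegrable_rpow' (by linarith)).1
  rw [setLIntegral_congr_fun measurableSet_Ioc (fun r hr => congrArg ENNReal.ofReal (h_eq hr)),
    ← ofReal_integral_eq_lintegral_ofReal (h_int.const_mul _)]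
  · rw [integral_const_mul, ← intervalIntegral.integral_of_le hρ.le,
      integral_rpow (Or.inl (by linarith)), sub_add_cancel, Real.zero_rpow hs.ne', sub_zero,
      Real.rpow_neg hρ.le]
    congr 1
    field_simp
  · filter_upwards [ae_restrict_mem measurableSet_Ioc] with r hr
    exact mul_nonneg (by positivity) (Real.rpow_nonneg hr.1.le _)

theorem lintegral_Ioi_div_rpow_div {s ρ t : ℝ} (hs : 0 < s) (hρ : 0 ≤ ρ) (ht : 0 < t) :
    ∫⁻ r in Ioi t, ENNReal.ofReal ((ρ / r) ^ s / r) = ENNReal.ofReal ((ρ / t) ^ s / s) := by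
  have h_eq : EqOn (fun r => (ρ / r) ^ s / r) (fun r => ρ ^ s * r ^ (-s - 1)) (Ioi t) := by
    intro r hr
    have hr : 0 < r := ht.trans hr
    simp only
    rw [Real.div_rpow hρ hr.le, Real.rpow_sub hr, Real.rpow_neg hr.le, Real.rpow_one]
    field_simp
  rw [setLIntegral_congr_fun measurableSet_Ioi (fun r hr => congrArg ENNReal.ofReal (h_eq hr)),
    ← ofReal_integral_eq_lintegral_ofReal
      ((integrableOn_Ioi_rpow_of_lt (by linarith) ht).const_mul _)]
  · rw [integral_const_mul, integral_Ioi_rpow_of_lt (by linarith) ht, sub_add_cancel,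
      Real.div_rpow hρ ht.le, Real.rpow_neg ht.le]
    congr 1
    field_simp
  · filter_upwards [ae_restrict_mem measurableSet_Ioi] with r hr
    exact mul_nonneg (by positivity) (Real.rpow_nonneg (ht.trans hr).le _)

/-- With `s = β p`, `q = 1 / (p - 1)` and `m = ∫_{B(x,r)} f`, this is the integrand of
`W_{β,p}^f(x, ·)` at radius `r`. -/
noncomputable def wolffKernel (n : ℕ) (s q r : ℝ) (m : ℝ≥0∞) : ℝ≥0∞ :=
  ENNReal.ofReal (1 / r) * (ENNReal.ofReal (r ^ (s - n)) * m) ^ q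

section WolffKernel

variable {n : ℕ} {s q r : ℝ}

theorem wolffKernel_ofReal (hq : 0 ≤ q) (hr : 0 ≤ r) {m : ℝ} (hm : 0 ≤ m) :
    wolffKernel n s q r (ENNReal.ofReal m) = ENNReal.ofReal (1 / r * (r ^ (s - n) * m) ^ q) := by
  have hrs : 0 ≤ r ^ (s - n) := Real.rpow_nonneg hr _
  rw [wolffKernel, ← ENNReal.ofReal_mul hrs, ENNReal.ofReal_rpow_of_nonneg (mul_nonneg hrs hm) hq,
    ← ENNReal.ofReal_mul (by positivity)]

theorem wolffKernel_mono (hq : 0 ≤ q) : Monotone (wolffKernel n s q r) := fun _ _ h => by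
  unfold wolffKernel; gcongr

theorem wolffKernel_zero (hq : 0 < q) : wolffKernel n s q r 0 = 0 := by
  simp [wolffKernel, ENNReal.zero_rpow_of_pos hq]

theorem wolffKernel_ne_top (hq : 0 ≤ q) {m : ℝ≥0∞} (hm : m ≠ ∞) : wolffKernel n s q r m ≠ ∞ :=
  ENNReal.mul_ne_top ENNReal.ofReal_ne_top
    (ENNReal.rpow_ne_top_of_nonneg hq (ENNReal.mul_ne_top ENNReal.ofReal_ne_top hm))

theorem wolffKernel_tsum_le {ι : Type*} (hq₀ : 0 < q) (hq₁ : q ≤ 1) (m : ι → ℝ≥0∞) :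
    wolffKernel n s q r (∑' i, m i) ≤ ∑' i, wolffKernel n s q r (m i) := by
  unfold wolffKernel
  rw [ENNReal.tsum_mul_left, ← ENNReal.tsum_mul_left (a := ENNReal.ofReal (r ^ (s - n)))]
  gcongr
  exact ENNReal.rpow_tsum_le_tsum_rpow hq₀ hq₁ _

theorem Monotone.measurable_wolffKernel {m : ℝ → ℝ≥0∞} (hm : Monotone m) :
    Measurable fun r => wolffKernel n s q r (m r) := by
  unfold wolffKernel
  have := hm.measurable
  fun_prop

end WolffKernel

section Bridge

variable {E : Type*} [PseudoMetricSpace E] [MeasurableSpace E] {μ : Measure E}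

theorem setIntegral_wolffIntegrand_eq_toReal_lintegral {n : ℕ} {β p : ℝ} (hp : 1 ≤ p) {F : E → ℝ≥0∞}
    (hFm : Measurable F) (hF : ∫⁻ y, F y ∂μ ≠ ∞) (x : E) {t : Set ℝ} (ht : MeasurableSet t)
    (ht₀ : t ⊆ Ioi 0) :
    ∫ r in t, 1 / r * ((r ^ (β * p - n) * ∫ y in ball x r, (F y).toReal ∂μ) ^ (1 / (p - 1)))
      = (∫⁻ r in t, wolffKernel n (β * p) (1 / (p - 1)) r (∫⁻ y in ball x r, F y ∂μ)).toReal := by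
  have hq : 0 ≤ 1 / (p - 1) := one_div_nonneg.2 (sub_nonneg.2 hp)
  have hball_ne_top (r : ℝ) : ∫⁻ y in ball x r, F y ∂μ ≠ ∞ :=
    ne_top_of_le_ne_top hF (setLIntegral_le_lintegral _ _)
  have hball (r : ℝ) : ∫ y in ball x r, (F y).toReal ∂μ = (∫⁻ y in ball x r, F y ∂μ).toReal :=
    integral_toReal hFm.aemeasurable (ae_restrict_of_ae (ae_lt_top hFm hF))
  have hmono : Monotone fun r => ∫⁻ y in ball x r, F y ∂μ :=
    fun _ _ h => lintegral_mono_set (ball_subset_ball h)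
  rw [← integral_toReal hmono.measurable_wolffKernel.aemeasurable
    (ae_of_all _ fun r => (wolffKernel_ne_top hq (hball_ne_top r)).lt_top)]
  refine setIntegral_congr_fun ht fun r hr => ?_
  have hr₀ : 0 < r := ht₀ hr
  have h := wolffKernel_ofReal (n := n) (s := β * p) hq hr₀.le
    (ENNReal.toReal_nonneg (a := ∫⁻ y in ball x r, F y ∂μ))
  rw [ENNReal.ofReal_toReal (hball_ne_top r)] at h
  rw [hball, h, ENNReal.toReal_ofReal (by positivity)]

end Bridge

section Ball

variable {E : Type*} [NormedAddCommGroup E] [NormedSpace ℝ E] [MeasurableSpace E] [BorelSpace E]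
  [FiniteDimensional ℝ E] (μ : Measure E) [μ.IsAddHaarMeasure] {s q ρ r : ℝ}

theorem wolffKernel_measure_ball (hq : 0 ≤ q) (hr : 0 < r) (hρ : 0 < ρ) (c : E) {t : ℝ}
    (ht : 0 < t) :
    wolffKernel (finrank ℝ E) s q r (ENNReal.ofReal (ρ ^ (-s)) * μ (ball c t))
      = ENNReal.ofReal (1 / r
          * (r ^ (s - finrank ℝ E) * (ρ ^ (-s) * (t ^ finrank ℝ E * μ.real (ball 0 1)))) ^ q) := by
  rw [Measure.addHaar_ball_of_pos μ c ht, ← ofReal_measureReal measure_ball_lt_top.ne,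
    ← ENNReal.ofReal_mul (by positivity), ← ENNReal.ofReal_mul (by positivity),
    wolffKernel_ofReal hq hr.le (by positivity)]

theorem wolffKernel_measure_ball_self (hq : 0 ≤ q) (hr : 0 < r) (hρ : 0 < ρ) (x : E) :
    wolffKernel (finrank ℝ E) s q r (ENNReal.ofReal (ρ ^ (-s)) * μ (ball x r))
      = ENNReal.ofReal (μ.real (ball 0 1) ^ q * ((r / ρ) ^ (s * q) / r)) := by
  rw [wolffKernel_measure_ball μ hq hr hρ x hr]
  have h : r ^ (s - finrank ℝ E) * (ρ ^ (-s) * (r ^ finrank ℝ E * μ.real (ball 0 1)))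
      = (r / ρ) ^ s * μ.real (ball 0 1) := by
    rw [Real.rpow_sub hr, Real.rpow_natCast, Real.div_rpow hr.le hρ.le, Real.rpow_neg hρ.le]
    field_simp
  rw [h, Real.mul_rpow (by positivity) measureReal_nonneg, ← Real.rpow_mul (by positivity)]
  congr 1
  ring

theorem wolffKernel_measure_ball_radius (hq : 0 ≤ q) (hr : 0 < r) (hρ : 0 < ρ) (c : E) :
    wolffKernel (finrank ℝ E) s q r (ENNReal.ofReal (ρ ^ (-s)) * μ (ball c ρ))
      = ENNReal.ofReal (μ.real (ball 0 1) ^ q * ((ρ / r) ^ ((finrank ℝ E - s) * q) / r)) := by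
  rw [wolffKernel_measure_ball μ hq hr hρ c hρ]
  have h : r ^ (s - finrank ℝ E) * (ρ ^ (-s) * (ρ ^ finrank ℝ E * μ.real (ball 0 1)))
      = (ρ / r) ^ (finrank ℝ E - s) * μ.real (ball 0 1) := by
    rw [Real.rpow_sub hr, Real.rpow_sub (by positivity), Real.rpow_natCast, Real.rpow_natCast,
      Real.div_rpow hρ.le hr.le, div_pow, Real.rpow_neg hρ.le]
    field_simp
  rw [h, Real.mul_rpow (by positivity) measureReal_nonneg, ← Real.rpow_mul (by positivity)]
  congr 1
  ring

theorem wolffKernel_measure_inter_le_self (hq : 0 ≤ q) (hr : 0 < r) (hρ : 0 < ρ) (c x : E) :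
    wolffKernel (finrank ℝ E) s q r (ENNReal.ofReal (ρ ^ (-s)) * μ (ball c ρ ∩ ball x r))
      ≤ ENNReal.ofReal (μ.real (ball 0 1) ^ q * ((r / ρ) ^ (s * q) / r)) :=
  (wolffKernel_mono hq (by gcongr; exact inter_subset_right)).trans_eq
    (wolffKernel_measure_ball_self μ hq hr hρ x)

theorem wolffKernel_measure_inter_le_radius (hq : 0 ≤ q) (hr : 0 < r) (hρ : 0 < ρ) (c x : E) :
    wolffKernel (finrank ℝ E) s q r (ENNReal.ofReal (ρ ^ (-s)) * μ (ball c ρ ∩ ball x r))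
      ≤ ENNReal.ofReal (μ.real (ball 0 1) ^ q * ((ρ / r) ^ ((finrank ℝ E - s) * q) / r)) :=
  (wolffKernel_mono hq (by gcongr; exact inter_subset_left)).trans_eq
    (wolffKernel_measure_ball_radius μ hq hr hρ c)

theorem lintegral_Ioi_wolffKernel_measure_inter_le (hq : 0 < q) (hsn : s < finrank ℝ E)
    (hρ : 0 < ρ) (c x : E) {t : ℝ} (ht : 0 < t) :
    ∫⁻ r in Ioi t, wolffKernel (finrank ℝ E) s q r
        (ENNReal.ofReal (ρ ^ (-s)) * μ (ball c ρ ∩ ball x r))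
      ≤ ENNReal.ofReal (μ.real (ball 0 1) ^ q)
          * ENNReal.ofReal ((ρ / t) ^ ((finrank ℝ E - s) * q) / ((finrank ℝ E - s) * q)) := by
  calc _ ≤ ∫⁻ r in Ioi t, ENNReal.ofReal (μ.real (ball 0 1) ^ q)
        * ENNReal.ofReal ((ρ / r) ^ ((finrank ℝ E - s) * q) / r) :=
        setLIntegral_mono' measurableSet_Ioi fun r hr =>
          (wolffKernel_measure_inter_le_radius μ hq.le (ht.trans hr) hρ c x).trans_eq
            (ENNReal.ofReal_mul (by positivity))
    _ = _ := by
      rw [lintegral_const_mul' _ _ ENNReal.ofReal_ne_top,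
        lintegral_Ioi_div_rpow_div (mul_pos (sub_pos.2 hsn) hq) hρ.le ht]

theorem lintegral_wolffKernel_measure_inter_le (hq : 0 < q) (hs : 0 < s)
    (hsn : s < finrank ℝ E) (hρ : 0 < ρ) (c x : E) :
    ∫⁻ r in Ioi 0, wolffKernel (finrank ℝ E) s q r
        (ENNReal.ofReal (ρ ^ (-s)) * μ (ball c ρ ∩ ball x r))
      ≤ ENNReal.ofReal (μ.real (ball 0 1) ^ q)
          * ENNReal.ofReal (1 / (s * q) + 1 / ((finrank ℝ E - s) * q)) := by
  have hα : 0 < (finrank ℝ E - s) * q := mul_pos (sub_pos.2 hsn) hq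
  rw [← Ioc_union_Ioi_eq_Ioi hρ.le, lintegral_union measurableSet_Ioi (Ioc_disjoint_Ioi le_rfl),
    ENNReal.ofReal_add (by positivity) (by positivity), mul_add]
  gcongr
  · calc _ ≤ ∫⁻ r in Ioc 0 ρ, ENNReal.ofReal (μ.real (ball 0 1) ^ q)
          * ENNReal.ofReal ((r / ρ) ^ (s * q) / r) :=
          setLIntegral_mono' measurableSet_Ioc fun r hr =>
            (wolffKernel_measure_inter_le_self μ hq.le hr.1 hρ c x).trans_eq
              (ENNReal.ofReal_mul (by positivity))
      _ = _ := by
        rw [lintegral_const_mul' _ _ ENNReal.ofReal_ne_top,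
          lintegral_Ioc_div_rpow_div (mul_pos hs hq) hρ]
  · simpa [div_self hρ.ne'] using lintegral_Ioi_wolffKernel_measure_inter_le μ hq hsn hρ c x hρ

theorem lintegral_wolffKernel_measure_inter_le_of_lt_dist (hq : 0 < q) (hsn : s < finrank ℝ E)
    (hρ : 0 < ρ) {c x : E} (hd : ρ < dist x c) :
    ∫⁻ r in Ioi 0, wolffKernel (finrank ℝ E) s q r
        (ENNReal.ofReal (ρ ^ (-s)) * μ (ball c ρ ∩ ball x r))
      ≤ ENNReal.ofReal (μ.real (ball 0 1) ^ q) * ENNReal.ofReal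
          ((ρ / (dist x c - ρ)) ^ ((finrank ℝ E - s) * q) / ((finrank ℝ E - s) * q)) := by
  have hzero : ∫⁻ r in Ioc 0 (dist x c - ρ), wolffKernel (finrank ℝ E) s q r
      (ENNReal.ofReal (ρ ^ (-s)) * μ (ball c ρ ∩ ball x r)) = 0 := by
    refine (setLIntegral_congr_fun measurableSet_Ioc fun r hr => ?_).trans lintegral_zero
    rw [(ball_disjoint_ball (by rw [dist_comm]; linarith [hr.2])).inter_eq, measure_empty,
      mul_zero, wolffKernel_zero hq]
  rw [← Ioc_union_Ioi_eq_Ioi (sub_pos.2 hd).le,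
    lintegral_union measurableSet_Ioi (Ioc_disjoint_Ioi le_rfl), hzero, zero_add]
  exact lintegral_Ioi_wolffKernel_measure_inter_le μ hq hsn hρ c x (sub_pos.2 hd)

theorem le_lintegral_wolffKernel_measure_ball (hq : 0 ≤ q) (hsn : s ≤ finrank ℝ E) (hρ : 0 < ρ)
    (c : E) :
    ENNReal.ofReal (μ.real (ball 0 1) ^ q * ((1 / 2) ^ ((finrank ℝ E - s) * q) / 2))
      ≤ ∫⁻ r in Ioo ρ (2 * ρ), wolffKernel (finrank ℝ E) s q r
          (ENNReal.ofReal (ρ ^ (-s)) * μ (ball c ρ)) := by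
  have hα : 0 ≤ (finrank ℝ E - s) * q := mul_nonneg (sub_nonneg.2 hsn) hq
  calc _ = ∫⁻ r in Ioo ρ (2 * ρ),
        ENNReal.ofReal (μ.real (ball 0 1) ^ q * ((1 / 2) ^ ((finrank ℝ E - s) * q) / (2 * ρ))) := by
        rw [setLIntegral_const, Real.volume_Ioo, ← ENNReal.ofReal_mul (by positivity)]
        congr 1
        field_simp
        ring
    _ ≤ _ := setLIntegral_mono' measurableSet_Ioo fun r hr => by
        have hr₀ : 0 < r := hρ.trans hr.1
        rw [wolffKernel_measure_ball_radius μ hq hr₀ hρ c]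
        have : 1 / 2 ≤ ρ / r := by rw [div_le_div_iff₀ two_pos hr₀]; linarith [hr.2]
        gcongr
        exact hr.2.le

end Ball

theorem wolff_eq_toReal_lintegral {N : ℕ} {β p : ℝ} (hp : 1 ≤ p)
    {F : EuclideanSpace ℝ (Fin N) → ℝ≥0∞} (hFm : Measurable F) (hF : ∫⁻ y, F y ≠ ∞)
    (x : EuclideanSpace ℝ (Fin N)) (R : ℝ) :
    wolff N β p (fun y => (F y).toReal) x R
      = (∫⁻ r in Ioo 0 R, wolffKernel N (β * p) (1 / (p - 1)) r (∫⁻ y in ball x r, F y)).toReal :=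
  setIntegral_wolffIntegrand_eq_toReal_lintegral hp hFm hF x measurableSet_Ioo Ioo_subset_Ioi_self

theorem wolffTop_eq_toReal_lintegral {N : ℕ} {β p : ℝ} (hp : 1 ≤ p)
    {F : EuclideanSpace ℝ (Fin N) → ℝ≥0∞} (hFm : Measurable F) (hF : ∫⁻ y, F y ≠ ∞)
    (x : EuclideanSpace ℝ (Fin N)) :
    wolffTop N β p (fun y => (F y).toReal) x
      = (∫⁻ r in Ioi 0, wolffKernel N (β * p) (1 / (p - 1)) r (∫⁻ y in ball x r, F y)).toReal :=
  setIntegral_wolffIntegrand_eq_toReal_lintegral hp hFm hF x measurableSet_Ioi subset_rfl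

namespace KatoCounterexample

noncomputable section

variable {E : Type*} [NormedAddCommGroup E] [NormedSpace ℝ E]

def radius (k : ℕ) : ℝ := (1 / 4) ^ (k + 2)

def center (e : E) (k : ℕ) : E := (1 / 2 : ℝ) ^ k • e

def density (s : ℝ) (e : E) (y : E) : ℝ≥0∞ :=
  ∑' k, (ball (center e k) (radius k)).indicator (fun _ => ENNReal.ofReal (radius k ^ (-s))) y

theorem radius_pos (k : ℕ) : 0 < radius k := by unfold radius; positivity

theorem radius_eq_sq (k : ℕ) : radius k = ((1 / 2) ^ (k + 2)) ^ 2 := by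
  rw [radius, ← pow_mul, mul_comm, pow_mul]; norm_num

theorem exists_two_mul_radius_le {R : ℝ} (hR : 0 < R) : ∃ k, 2 * radius k ≤ R := by
  obtain ⟨k, hk⟩ := exists_pow_lt_of_lt_one hR (by norm_num : (1 / 4 : ℝ) < 1)
  refine ⟨k, le_trans ?_ hk.le⟩
  rw [radius, pow_add]
  have : (0 : ℝ) ≤ (1 / 4) ^ k := by positivity
  nlinarith

theorem radius_lt_and_div_sub_le {k : ℕ} {d : ℝ} (hd : (1 / 2) ^ (k + 2) ≤ d) :
    radius k < d ∧ radius k / (d - radius k) ≤ (1 / 2) ^ k := by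
  set u : ℝ := (1 / 2) ^ (k + 2)
  have hu₀ : 0 < u := by positivity
  have hu₁ : u ≤ 1 / 4 :=
    (pow_le_pow_of_le_one (by norm_num) (by norm_num) (by omega : 2 ≤ k + 2)).trans_eq (by norm_num)
  have hku : (1 / 2 : ℝ) ^ k = 4 * u := by simp only [u, pow_add]; ring
  have hlt : radius k < d := by rw [radius_eq_sq]; nlinarith
  refine ⟨hlt, ?_⟩
  rw [div_le_iff₀ (sub_pos.2 hlt), hku, radius_eq_sq]
  nlinarith

variable {e : E}

theorem dist_center (he : ‖e‖ = 1) (j k : ℕ) :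
    dist (center e j) (center e k) = |(1 / 2 : ℝ) ^ j - (1 / 2) ^ k| := by
  rw [dist_eq_norm, center, center, ← sub_smul, norm_smul, he, mul_one, Real.norm_eq_abs]

theorem subsingleton_near_center (he : ‖e‖ = 1) (x : E) :
    {k | dist x (center e k) < (1 / 2) ^ (k + 2)}.Subsingleton := by
  intro j hj k hk
  by_contra hne
  wlog hjk : j < k generalizing j k
  · exact this hk hj (Ne.symm hne) (lt_of_le_of_ne (not_lt.1 hjk) (Ne.symm hne))
  have hj : dist x (center e j) < (1 / 2) ^ j / 4 := hj.trans_eq (by ring)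
  have hk : dist x (center e k) < (1 / 2) ^ k / 4 := hk.trans_eq (by ring)
  have hj₀ : (0 : ℝ) < (1 / 2) ^ j := by positivity
  have hkj : (1 / 2 : ℝ) ^ k ≤ (1 / 2) ^ j / 2 := by
    have := pow_le_pow_of_le_one (by norm_num : (0 : ℝ) ≤ 1 / 2) (by norm_num) hjk
    rw [pow_succ] at this
    linarith
  have h := dist_triangle_left (center e j) (center e k) x
  rw [dist_center he, abs_of_nonneg (by linarith)] at h
  linarith

theorem ball_center_subset (he : ‖e‖ = 1) (k : ℕ) : ball (center e k) (radius k) ⊆ ball 0 2 := by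
  intro y hy
  have hc : dist (center e k) 0 ≤ 1 := by
    rw [dist_zero_right, center, norm_smul, he, mul_one, Real.norm_eq_abs,
      abs_of_nonneg (by positivity)]
    exact pow_le_one₀ (by norm_num) (by norm_num)
  have hr : radius k ≤ 1 := pow_le_one₀ (by norm_num) (by norm_num)
  rw [mem_ball] at hy ⊢
  linarith [dist_triangle y (center e k) 0]

theorem density_eq_zero (he : ‖e‖ = 1) (s : ℝ) {y : E} (hy : y ∉ ball 0 2) : density s e y = 0 :=
  ENNReal.tsum_eq_zero.2 fun k => indicator_of_notMem (fun h => hy (ball_center_subset he k h)) _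

theorem hasCompactSupport_toReal_density [ProperSpace E] (he : ‖e‖ = 1) (s : ℝ) :
    HasCompactSupport fun y => (density s e y).toReal :=
  HasCompactSupport.intro (isCompact_closedBall 0 2) fun y hy => by
    rw [density_eq_zero he s (fun h => hy (ball_subset_closedBall h)), ENNReal.toReal_zero]

variable [MeasurableSpace E] [BorelSpace E]

theorem measurable_density (s : ℝ) : Measurable (density s e) :=
  Measurable.tsum fun _ => measurable_const.indicator measurableSet_ball

theorem setLIntegral_density (μ : Measure E) (s : ℝ) (t : Set E) :
    ∫⁻ y in t, density s e y ∂μ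
      = ∑' k, ENNReal.ofReal (radius k ^ (-s)) * μ (ball (center e k) (radius k) ∩ t) := by
  unfold density
  rw [lintegral_tsum fun k => (measurable_const.indicator measurableSet_ball).aemeasurable]
  congr 1 with k
  rw [lintegral_indicator measurableSet_ball, setLIntegral_const,
    Measure.restrict_apply measurableSet_ball]

variable [FiniteDimensional ℝ E] (μ : Measure E) [μ.IsAddHaarMeasure] {s q : ℝ}

theorem lintegral_density_ne_top (hsn : s < finrank ℝ E) : ∫⁻ y, density s e y ∂μ ≠ ∞ := by
  set b : ℝ := (1 / 4) ^ ((finrank ℝ E : ℝ) - s)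
  have hb₀ : 0 ≤ b := by positivity
  have hb₁ : b < 1 := Real.rpow_lt_one (by norm_num) (by norm_num) (sub_pos.2 hsn)
  have hterm (k : ℕ) : ENNReal.ofReal (radius k ^ (-s)) * μ (ball (center e k) (radius k) ∩ univ)
      = ENNReal.ofReal (b ^ (k + 2)) * μ (ball 0 1) := by
    rw [inter_univ, Measure.addHaar_ball_of_pos μ _ (radius_pos k), ← mul_assoc,
      ← ENNReal.ofReal_mul (Real.rpow_nonneg (radius_pos k).le _), ← Real.rpow_natCast,
      ← Real.rpow_add (radius_pos k), neg_add_eq_sub, radius, ← Real.rpow_pow_comm (by norm_num)]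
  rw [← setLIntegral_univ, setLIntegral_density μ s univ, tsum_congr hterm,
    ENNReal.tsum_mul_right, ← ENNReal.ofReal_tsum_of_nonneg (fun _ => by positivity)
      ((summable_nat_add_iff 2).2 (summable_geometric_of_lt_one hb₀ hb₁))]
  exact ENNReal.mul_ne_top ENNReal.ofReal_ne_top measure_ball_lt_top.ne

theorem lintegral_wolffKernel_bump_le (hq : 0 < q) (hs : 0 < s) (hsn : s < finrank ℝ E)
    (x : E) (k : ℕ) :
    ∫⁻ r in Ioi 0, wolffKernel (finrank ℝ E) s q r
        (ENNReal.ofReal (radius k ^ (-s)) * μ (ball (center e k) (radius k) ∩ ball x r))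
      ≤ {k | dist x (center e k) < (1 / 2) ^ (k + 2)}.indicator (fun _ =>
          ENNReal.ofReal (μ.real (ball 0 1) ^ q)
            * ENNReal.ofReal (1 / (s * q) + 1 / ((finrank ℝ E - s) * q))) k
        + ENNReal.ofReal (μ.real (ball 0 1) ^ q)
          * ENNReal.ofReal (((1 / 2) ^ ((finrank ℝ E - s) * q)) ^ k / ((finrank ℝ E - s) * q)) := by
  by_cases hk : k ∈ {k | dist x (center e k) < (1 / 2) ^ (k + 2)}
  · rw [indicator_of_mem hk]
    exact (lintegral_wolffKernel_measure_inter_le μ hq hs hsn (radius_pos k) _ x).trans le_self_add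
  · obtain ⟨hlt, hdiv⟩ := radius_lt_and_div_sub_le (not_lt.1 hk)
    rw [indicator_of_notMem hk, zero_add, Real.rpow_pow_comm (by norm_num)]
    refine (lintegral_wolffKernel_measure_inter_le_of_lt_dist μ hq hsn (radius_pos k) hlt).trans ?_
    gcongr
    exact div_nonneg (radius_pos k).le (sub_pos.2 hlt).le

theorem exists_lintegral_wolffKernel_density_le (hq₀ : 0 < q) (hq₁ : q ≤ 1) (hs : 0 < s)
    (hsn : s < finrank ℝ E) (he : ‖e‖ = 1) :
    ∃ A, ∀ x, ∫⁻ r in Ioi 0, wolffKernel (finrank ℝ E) s q r (∫⁻ y in ball x r, density s e y ∂μ)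
      ≤ ENNReal.ofReal A := by
  set α := ((finrank ℝ E : ℝ) - s) * q
  have hα : 0 < α := mul_pos (sub_pos.2 hsn) hq₀
  set b : ℝ := (1 / 2) ^ α
  have hb₀ : 0 ≤ b := by positivity
  have hb₁ : b < 1 := Real.rpow_lt_one (by norm_num) (by norm_num) hα
  set ω := μ.real (ball (0 : E) 1)
  set C := ENNReal.ofReal (ω ^ q) * ENNReal.ofReal (1 / (s * q) + 1 / α)
  refine ⟨ω ^ q * (1 / (s * q) + 1 / α) + ω ^ q * ((1 - b)⁻¹ / α), fun x => ?_⟩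
  have hfar : ∑' k, ENNReal.ofReal (b ^ k / α) = ENNReal.ofReal ((1 - b)⁻¹ / α) := by
    rw [← ENNReal.ofReal_tsum_of_nonneg (fun _ => by positivity)
      ((summable_geometric_of_lt_one hb₀ hb₁).div_const α), tsum_div_const,
      tsum_geometric_of_lt_one hb₀ hb₁]
  calc _ ≤ ∫⁻ r in Ioi 0, ∑' k, wolffKernel (finrank ℝ E) s q r
          (ENNReal.ofReal (radius k ^ (-s)) * μ (ball (center e k) (radius k) ∩ ball x r)) :=
        lintegral_mono fun r => by
          rw [setLIntegral_density μ s (ball _ _)]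
          exact wolffKernel_tsum_le hq₀ hq₁ _
    _ = ∑' k, ∫⁻ r in Ioi 0, wolffKernel (finrank ℝ E) s q r
          (ENNReal.ofReal (radius k ^ (-s)) * μ (ball (center e k) (radius k) ∩ ball x r)) :=
        lintegral_tsum fun k =>
          (Monotone.measurable_wolffKernel fun r r' h => by gcongr).aemeasurable
    _ ≤ ∑' k, ({k | dist x (center e k) < (1 / 2) ^ (k + 2)}.indicator (fun _ => C) k
          + ENNReal.ofReal (ω ^ q) * ENNReal.ofReal (b ^ k / α)) :=
        ENNReal.tsum_le_tsum (lintegral_wolffKernel_bump_le μ hq₀ hs hsn x)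
    _ ≤ C + ENNReal.ofReal (ω ^ q) * ENNReal.ofReal ((1 - b)⁻¹ / α) := by
        rw [ENNReal.tsum_add, ENNReal.tsum_mul_left, hfar]
        gcongr
        exact (subsingleton_near_center he x).tsum_indicator_const_le C
    _ = _ := by
        rw [ENNReal.ofReal_add (by positivity) (by positivity), ENNReal.ofReal_mul (by positivity),
          ENNReal.ofReal_mul (by positivity)]

theorem exists_pos_le_lintegral_wolffKernel_density (hq : 0 ≤ q) (hsn : s ≤ finrank ℝ E) :
    ∃ a > 0, ∀ R > 0, ∃ x, ENNReal.ofReal a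
      ≤ ∫⁻ r in Ioo 0 R, wolffKernel (finrank ℝ E) s q r (∫⁻ y in ball x r, density s e y ∂μ) := by
  have hω : 0 < μ.real (ball 0 1) :=
    ENNReal.toReal_pos (measure_ball_pos μ 0 one_pos).ne' measure_ball_lt_top.ne
  refine ⟨μ.real (ball 0 1) ^ q * ((1 / 2) ^ ((finrank ℝ E - s) * q) / 2), by positivity,
    fun R hR => ?_⟩
  obtain ⟨k, hk⟩ := exists_two_mul_radius_le hR
  refine ⟨center e k,
    (le_lintegral_wolffKernel_measure_ball μ hq hsn (radius_pos k) (center e k)).trans ?_⟩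
  calc _ ≤ ∫⁻ r in Ioo (radius k) (2 * radius k), wolffKernel (finrank ℝ E) s q r
          (∫⁻ y in ball (center e k) r, density s e y ∂μ) :=
        setLIntegral_mono' measurableSet_Ioo fun r hr => wolffKernel_mono hq <| by
          rw [setLIntegral_density μ s (ball _ _)]
          refine le_of_eq_of_le ?_ (ENNReal.le_tsum k)
          rw [inter_eq_left.2 (ball_subset_ball hr.1.le)]
    _ ≤ _ := lintegral_mono_set (Ioo_subset_Ioo (radius_pos k).le hk)

end

end KatoCounterexample

open KatoCounterexample

theorem kato_counterexample_general {N : ℕ} (p : ℝ) (hp : 2 ≤ p) (hpN : p < N) :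
    ∃ (f : EuclideanSpace ℝ (Fin N) → ℝ) (a A : ℝ),
      (∀ y, 0 ≤ f y) ∧ HasCompactSupport f ∧ Integrable f ∧
      0 < a ∧ a ≤ A ∧
      (∀ x, wolffTop N 1 p f x ≤ A) ∧
      (∀ R : ℝ, 0 < R → ∃ x, a ≤ wolff N 1 p f x R) := by
  have hN : 0 < N := by exact_mod_cast (by linarith : (0 : ℝ) < N)
  have hdim : finrank ℝ (EuclideanSpace ℝ (Fin N)) = N := finrank_euclideanSpace_fin
  set e : EuclideanSpace ℝ (Fin N) := EuclideanSpace.single ⟨0, hN⟩ 1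
  have he : ‖e‖ = 1 := by simp [e]
  have hq₀ : 0 < 1 / (p - 1) := one_div_pos.2 (by linarith)
  have hq₁ : 1 / (p - 1) ≤ 1 := by rw [div_le_one (by linarith)]; linarith
  have hsn : 1 * p < finrank ℝ (EuclideanSpace ℝ (Fin N)) := by rw [hdim, one_mul]; exact hpN
  have hFm : Measurable (density (1 * p) e) := measurable_density _
  have hF := lintegral_density_ne_top volume hsn (e := e)
  obtain ⟨A, hupper⟩ :=
    exists_lintegral_wolffKernel_density_le volume hq₀ hq₁ (by linarith) hsn he
  obtain ⟨a, ha, hlower⟩ :=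
    exists_pos_le_lintegral_wolffKernel_density volume hq₀.le hsn.le (e := e)
  rw [hdim] at hupper hlower
  refine ⟨fun y => (density (1 * p) e y).toReal, a, max a A, fun _ => ENNReal.toReal_nonneg,
    hasCompactSupport_toReal_density he _,
    integrable_toReal_of_lintegral_ne_top hFm.aemeasurable hF, ha, le_max_left _ _,
    fun x => ?_, fun R hR => ?_⟩
  · rw [wolffTop_eq_toReal_lintegral (by linarith) hFm hF]
    exact ENNReal.toReal_le_of_le_ofReal (ha.le.trans (le_max_left _ _))
      ((hupper x).trans (ENNReal.ofReal_le_ofReal (le_max_right _ _)))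
  · obtain ⟨x, hx⟩ := hlower R hR
    refine ⟨x, ?_⟩
    rw [wolff_eq_toReal_lintegral (by linarith) hFm hF]
    exact (ENNReal.ofReal_le_iff_le_toReal (ne_top_of_le_ne_top ENNReal.ofReal_ne_top
      ((lintegral_mono_set Ioo_subset_Ioi_self).trans (hupper x)))).1 hx

/-- Appendix example: there is a nonnegative compactly supported integrable `f`
with `sup_x W_p^f(x,∞) < ∞` but `lim_{R→0} sup_x W_p^f(x,R) > 0`. -/
theorem kato_counterexample {N : ℕ} (hN : 3 ≤ N) (p : ℝ) (hp : 2 ≤ p) (hpN : p < N) :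
    ∃ (f : EuclideanSpace ℝ (Fin N) → ℝ) (a A : ℝ),
      (∀ y, 0 ≤ f y) ∧ HasCompactSupport f ∧ Integrable f ∧
      0 < a ∧ a ≤ A ∧
      (∀ x, wolffTop N 1 p f x ≤ A) ∧
      (∀ R : ℝ, 0 < R → ∃ x, a ≤ wolff N 1 p f x R) :=
  kato_counterexample_general p hp hpN
end
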